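/- arXiv:1705.10353 — 6 statements merged into one kernel-verified Lean document; each statement's English description precedes it below -/
import Mathlib

section
/- The number of circular area sequences of length n, i.e. sequences (a_1,...,a_n) of integers with 0 ≤ a_i ≤ n-1 for all i and a_i - 1 ≤ a_{i+1} for all i (indices mod n), equals (n+2)·C(2n-1, n-1) - 2^(2n-1). -/
/-!
Write `d i = a (i + 1) - a i + 1 ≥ 0`; these cyclic increments sum to `n`. The word
`1^(d 0) 0 1^(d 1) 0 ⋯ 0 1^(d (n-1))` is a ±1 walk with `n` up and `n - 1` down steps, and
`a i - a 0` is its height right after the `i`-th down step. Conversely a walk and a starting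
height `h` give back a circular area sequence exactly when the shifted walk stays in `[0, n]`,
so the fibre over a walk has `n + 1 - (max - min)` elements. Summing over walks by the
reflection principle, `∑ max = 4^(n-1)` and `∑ (-min) = 4^(n-1) - C(2n-1, n)`.
-/

open Finset

namespace CircularAreaSeq

section Walk

variable {L : ℕ}

/-- `true` is an up step and `false` a down step; there are no steps (value `0`) past `L`. -/
def step (v : Fin L → Bool) (j : ℕ) : ℤ :=
  if h : j < L then (if v ⟨j, h⟩ then 1 else -1) else 0

def walk (v : Fin L → Bool) (t : ℕ) : ℤ := ∑ j ∈ range t, step v j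

def downs (v : Fin L → Bool) (t : ℕ) : ℕ := Nat.count (fun j => step v j = -1) t

def walkMax (v : Fin L → Bool) : ℤ := (range (L + 1)).sup' nonempty_range_add_one (walk v)

def walkMin (v : Fin L → Bool) : ℤ := (range (L + 1)).inf' nonempty_range_add_one (walk v)

lemma step_eq_one_or_neg_one (v : Fin L → Bool) {j : ℕ} (hj : j < L) :
    step v j = 1 ∨ step v j = -1 := by
  simp only [step, dif_pos hj]
  split <;> simp

lemma step_eq_neg_one_iff {v : Fin L → Bool} {j : ℕ} :
    step v j = -1 ↔ ∃ h : j < L, v ⟨j, h⟩ = false := by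
  unfold step
  split_ifs <;> simp_all

@[simp] lemma walk_zero (v : Fin L → Bool) : walk v 0 = 0 := by simp [walk]

lemma walk_succ (v : Fin L → Bool) (t : ℕ) : walk v (t + 1) = walk v t + step v t :=
  sum_range_succ _ _

lemma walk_eq (v : Fin L → Bool) {t : ℕ} (ht : t ≤ L) : walk v t = t - 2 * downs v t := by
  induction t with
  | zero => simp [downs]
  | succ t ih =>
    rw [walk_succ, downs, Nat.count_succ, ← downs, ih (by omega)]
    rcases step_eq_one_or_neg_one v (by omega : t < L) with h | h <;> simp [h] <;> ring

lemma downs_le_add (v : Fin L → Bool) {s t : ℕ} (hst : s ≤ t) :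
    downs v t ≤ downs v s + (t - s) := by
  obtain ⟨d, rfl⟩ := Nat.exists_eq_add_of_le hst
  simp only [downs, Nat.count_add, add_tsub_cancel_left]
  exact Nat.add_le_add_left (Nat.count_le _) _

lemma downs_mono (v : Fin L → Bool) {s t : ℕ} (hst : s ≤ t) : downs v s ≤ downs v t :=
  Nat.count_monotone _ hst

lemma walkMax_sub_walkMin_le (v : Fin L → Bool) {c : ℕ} (hd : downs v L ≤ c)
    (hu : L - downs v L ≤ c) : walkMax v - walkMin v ≤ c := by
  obtain ⟨i, hi, hmax⟩ := exists_mem_eq_sup' nonempty_range_add_one (walk v)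
  obtain ⟨j, hj, hmin⟩ := exists_mem_eq_inf' nonempty_range_add_one (walk v)
  rw [mem_range, Nat.lt_succ_iff] at hi hj
  rw [walkMax, walkMin, hmax, hmin, walk_eq v hi, walk_eq v hj]
  have hjj : downs v j ≤ j := Nat.count_le _
  rcases le_total j i with h | h
  · have := downs_mono v h
    have := downs_le_add v hi
    omega
  · have := downs_le_add v h
    have := downs_mono v hj
    omega

lemma le_walkMax_iff {v : Fin L → Bool} {x : ℤ} : x ≤ walkMax v ↔ ∃ t ≤ L, x ≤ walk v t := by
  simp [walkMax, le_sup'_iff]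

lemma walkMin_le_iff {v : Fin L → Bool} {x : ℤ} : walkMin v ≤ x ↔ ∃ t ≤ L, walk v t ≤ x := by
  simp [walkMin, inf'_le_iff]

lemma walkMax_le_iff {v : Fin L → Bool} {x : ℤ} : walkMax v ≤ x ↔ ∀ t ≤ L, walk v t ≤ x := by
  simp [walkMax, sup'_le_iff]

lemma le_walkMin_iff {v : Fin L → Bool} {x : ℤ} : x ≤ walkMin v ↔ ∀ t ≤ L, x ≤ walk v t := by
  simp [walkMin, le_inf'_iff]

lemma walk_le_walkMax (v : Fin L → Bool) {t : ℕ} (ht : t ≤ L) : walk v t ≤ walkMax v :=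
  le_walkMax_iff.2 ⟨t, ht, le_rfl⟩

lemma walkMin_le_walk (v : Fin L → Bool) {t : ℕ} (ht : t ≤ L) : walkMin v ≤ walk v t :=
  walkMin_le_iff.2 ⟨t, ht, le_rfl⟩

lemma walkMin_nonpos (v : Fin L → Bool) : walkMin v ≤ 0 := by
  simpa using walkMin_le_walk v (Nat.zero_le L)

lemma walkMax_nonneg (v : Fin L → Bool) : 0 ≤ walkMax v := by
  simpa using walk_le_walkMax v (Nat.zero_le L)

end Walk

section Flip

variable {L : ℕ}

lemma step_not (v : Fin L → Bool) (j : ℕ) : step (fun p => !v p) j = -step v j := by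
  unfold step
  split_ifs <;> simp_all

lemma walk_not (v : Fin L → Bool) (t : ℕ) : walk (fun p => !v p) t = -walk v t := by
  simp [walk, step_not]

lemma downs_not (v : Fin L → Bool) : downs (fun p => !v p) L = L - downs v L := by
  have h := walk_not v L
  rw [walk_eq _ le_rfl, walk_eq _ le_rfl] at h
  have := Nat.count_le (fun j => step v j = -1) (n := L)
  simp only [downs] at h ⊢
  omega

lemma le_neg_walkMin_iff {v : Fin L → Bool} {x : ℤ} :
    x ≤ -walkMin v ↔ x ≤ walkMax (fun p => !v p) := by
  rw [le_neg, walkMin_le_iff, le_walkMax_iff]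
  simp only [walk_not, le_neg]

end Flip

section Cons

variable {L : ℕ}

lemma step_cons_zero (b : Bool) (w : Fin L → Bool) :
    step (Fin.cons b w : Fin (L + 1) → Bool) 0 = if b then 1 else -1 := by
  simp [step]

lemma step_cons_succ (b : Bool) (w : Fin L → Bool) (j : ℕ) :
    step (Fin.cons b w : Fin (L + 1) → Bool) (j + 1) = step w j := by
  unfold step
  by_cases hj : j < L
  · rw [dif_pos (by omega), dif_pos hj]
    rfl
  · rw [dif_neg (by omega), dif_neg hj]

lemma walk_cons_succ (b : Bool) (w : Fin L → Bool) (t : ℕ) :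
    walk (Fin.cons b w : Fin (L + 1) → Bool) (t + 1) = (if b then 1 else -1) + walk w t := by
  simp only [walk, sum_range_succ', step_cons_succ, step_cons_zero]
  ring

lemma downs_cons (b : Bool) (w : Fin L → Bool) :
    downs (Fin.cons b w : Fin (L + 1) → Bool) (L + 1) = downs w L + if b then 0 else 1 := by
  simp only [downs, Nat.count_succ', step_cons_succ, step_cons_zero]
  cases b <;> simp

lemma le_walkMax_cons_iff (b : Bool) (w : Fin L → Bool) {x : ℤ} (hx : 0 < x) :
    x ≤ walkMax (Fin.cons b w : Fin (L + 1) → Bool) ↔ x - (if b then 1 else -1) ≤ walkMax w := by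
  simp only [le_walkMax_iff]
  constructor
  · rintro ⟨_ | t, ht, h⟩
    · simp at h; omega
    · exact ⟨t, by omega, by rw [walk_cons_succ] at h; linarith⟩
  · rintro ⟨t, ht, h⟩
    exact ⟨t + 1, by omega, by rw [walk_cons_succ]; linarith⟩

lemma card_filter_cons (P : (Fin (L + 1) → Bool) → Prop) [DecidablePred P] :
    #{v | P v} =
      #{w : Fin L → Bool | P (Fin.cons true w)} + #{w : Fin L → Bool | P (Fin.cons false w)} := by
  simp only [card_filter]
  rw [← Fintype.sum_equiv (Fin.consEquiv fun _ => Bool)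
    (fun bw => if P (Fin.cons bw.1 bw.2) then 1 else 0) _ fun _ => rfl,
    Fintype.sum_prod_type, Fintype.sum_bool]

end Cons

section Reflection

theorem card_downs_eq (L z : ℕ) : #{v : Fin L → Bool | downs v L = z} = L.choose z := by
  induction L generalizing z with
  | zero => cases z <;> simp [downs]
  | succ L ih =>
    rw [card_filter_cons]
    simp only [downs_cons, if_true, if_false, Bool.false_eq_true, add_zero]
    cases z with
    | zero => simp [ih]
    | succ z => simp [ih, Nat.choose_succ_succ', add_comm]

/-- The reflection principle, proved through Pascal's rule by removing the first step. -/
theorem card_downs_eq_lt_walkMax (L z t : ℕ) (hL : L ≤ 2 * z + t + 1) :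
    #{v : Fin L → Bool | downs v L = z ∧ (t : ℤ) < walkMax v} = L.choose (z + t + 1) := by
  induction L generalizing z t with
  | zero => simp [walkMax]
  | succ L ih =>
    rw [card_filter_cons]
    simp only [downs_cons, Int.lt_iff_add_one_le,
      le_walkMax_cons_iff _ _ (by positivity : (0 : ℤ) < t + 1)]
    have hup : #{w : Fin L → Bool | downs w L = z ∧ (t : ℤ) ≤ walkMax w} = L.choose (z + t) := by
      cases t with
      | zero => simpa [walkMax_nonneg] using card_downs_eq L z
      | succ t => simpa [add_assoc, Int.add_one_le_iff] using ih z t (by omega)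
    have hdown : #{w : Fin L → Bool | downs w L + 1 = z ∧ (t : ℤ) + 1 + 1 ≤ walkMax w}
        = L.choose (z + t + 1) := by
      cases z with
      | zero => simp [Nat.choose_eq_zero_of_lt (by omega : L < t + 1)]
      | succ z =>
        have := ih z (t + 1) (by omega)
        simp only [Int.lt_iff_add_one_le, Nat.cast_add, Nat.cast_one] at this
        simpa [add_assoc, add_comm 1 t] using this
    simp only [if_true, if_false, Bool.false_eq_true, add_zero, sub_neg_eq_add,
      add_sub_cancel_right]
    rw [hup, hdown, Nat.choose_succ_succ']

theorem card_downs_eq_lt_neg_walkMin (L z t : ℕ) (hz : z ≤ L) (hL : L ≤ 2 * (L - z) + t + 1) :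
    #{v : Fin L → Bool | downs v L = z ∧ (t : ℤ) < -walkMin v} = L.choose (L - z + t + 1) := by
  rw [← card_downs_eq_lt_walkMax L (L - z) t hL]
  refine card_nbij' (fun v p => !v p) (fun v p => !v p) (fun v hv => ?_) (fun v hv => ?_)
    (fun v _ => by simp) (fun v _ => by simp)
  · simp only [mem_coe, mem_filter, mem_univ, true_and, Int.lt_iff_add_one_le,
      le_neg_walkMin_iff] at hv ⊢
    rw [downs_not]
    exact ⟨by omega, hv.2⟩
  · simp only [mem_coe, mem_filter, mem_univ, true_and, Int.lt_iff_add_one_le, le_neg_walkMin_iff,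
      Bool.not_not] at hv ⊢
    rw [downs_not]
    exact ⟨by omega, hv.2⟩

end Reflection

section DownEnds

variable {L : ℕ}

/-- The times right after a down step, and time `0`. The minimum of the walk is attained at one of
them and, if the walk ends one above its start, its maximum exceeds their maximum by one. -/
def downEnds (v : Fin L → Bool) : Finset ℕ :=
  insert 0 ({j ∈ range L | step v j = -1}.image (· + 1))

lemma mem_downEnds {v : Fin L → Bool} {t : ℕ} :
    t ∈ downEnds v ↔ t = 0 ∨ ∃ j, step v j = -1 ∧ j + 1 = t := by
  simp only [downEnds, mem_insert, mem_image, mem_filter, mem_range]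
  refine or_congr_right ⟨fun ⟨j, hj, hjt⟩ => ⟨j, hj.2, hjt⟩, fun ⟨j, hj, hjt⟩ => ⟨j, ⟨?_, hj⟩, hjt⟩⟩
  obtain ⟨hjL, -⟩ := step_eq_neg_one_iff.1 hj
  exact hjL

lemma card_downEnds (v : Fin L → Bool) : #(downEnds v) = downs v L + 1 := by
  rw [downEnds, card_insert_of_notMem (by simp), card_image_of_injective _ (add_left_injective 1),
    downs, Nat.count_eq_card_filter_range]

variable {v : Fin L → Bool} (hL : walk v L = 1)
include hL

lemma walk_bounds_of_downEnds {lo hi : ℤ} (h : ∀ t ∈ downEnds v, lo ≤ walk v t ∧ walk v t ≤ hi)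
    {t : ℕ} (ht : t ≤ L) : lo ≤ walk v t ∧ walk v t ≤ hi + 1 := by
  have h0 := h 0 (mem_downEnds.2 (Or.inl rfl))
  have hafter : ∀ j, step v j = -1 → lo ≤ walk v (j + 1) ∧ walk v (j + 1) ≤ hi :=
    fun j hj => h _ (mem_downEnds.2 (Or.inr ⟨j, hj, rfl⟩))
  constructor
  · induction t with
    | zero => exact h0.1
    | succ t ih =>
      rcases step_eq_one_or_neg_one v (by omega : t < L) with hs | hs
      · rw [walk_succ, hs]; linarith [ih (by omega)]
      · exact (hafter t hs).1
  · obtain ⟨k, hk⟩ := Nat.exists_eq_add_of_le ht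
    induction k generalizing t with
    | zero => simp only [walk_zero] at h0; rw [show t = L by omega, hL]; linarith
    | succ k ih =>
      have := walk_succ v t
      rcases step_eq_one_or_neg_one v (by omega : t < L) with hs | hs
      · linarith [ih (t := t + 1) (by omega) (by omega)]
      · linarith [(hafter t hs).2]

lemma walk_add_one_le_walkMax {t : ℕ} (ht : t ∈ downEnds v) : walk v t + 1 ≤ walkMax v := by
  rcases mem_downEnds.1 ht with rfl | ⟨j, hj, rfl⟩
  · simpa [hL] using walk_le_walkMax v le_rfl
  · obtain ⟨hjL, -⟩ := step_eq_neg_one_iff.1 hj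
    rw [walk_succ, hj]
    linarith [walk_le_walkMax v hjL.le]

lemma mem_Icc_iff_forall_downEnds {c h : ℤ} :
    h ∈ Icc (-walkMin v) (c + 1 - walkMax v) ↔
      ∀ t ∈ downEnds v, 0 ≤ h + walk v t ∧ h + walk v t ≤ c := by
  rw [mem_Icc]
  constructor
  · rintro ⟨hmin, hmax⟩ t ht
    have htL : t ≤ L := by
      rcases mem_downEnds.1 ht with rfl | ⟨j, hj, rfl⟩
      · exact Nat.zero_le L
      · exact (step_eq_neg_one_iff.1 hj).1
    exact ⟨by linarith [walkMin_le_walk v htL], by linarith [walk_add_one_le_walkMax hL ht]⟩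
  · intro hb
    have := fun t (ht : t ≤ L) => walk_bounds_of_downEnds hL (lo := -h) (hi := c - h)
      (fun t' ht' => ⟨by linarith [hb t' ht'], by linarith [hb t' ht']⟩) ht
    constructor
    · linarith [le_walkMin_iff.2 fun t ht => (this t ht).1]
    · linarith [walkMax_le_iff.2 fun t ht => (this t ht).2]

end DownEnds

section WordOfDownEnds

variable {L m : ℕ} {τ : Fin (m + 1) → ℕ}

def wordOfDownEnds (τ : Fin (m + 1) → ℕ) (p : Fin L) : Bool := decide (∀ i, τ i ≠ p + 1)

lemma step_wordOfDownEnds_eq_neg_one_iff {j : ℕ} :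
    step (wordOfDownEnds τ : Fin L → Bool) j = -1 ↔ j < L ∧ ∃ i, τ i = j + 1 := by
  simp [step_eq_neg_one_iff, wordOfDownEnds]

variable (hτ : StrictMono τ) (hτ0 : τ 0 = 0) (hτL : ∀ i, τ i ≤ L)
include hτ0 hτL

lemma mem_downEnds_wordOfDownEnds {t : ℕ} :
    t ∈ downEnds (wordOfDownEnds τ : Fin L → Bool) ↔ ∃ i, τ i = t := by
  simp only [mem_downEnds, step_wordOfDownEnds_eq_neg_one_iff]
  constructor
  · rintro (rfl | ⟨j, ⟨-, i, hi⟩, rfl⟩)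
    · exact ⟨0, hτ0⟩
    · exact ⟨i, hi⟩
  · rintro ⟨i, rfl⟩
    rcases Nat.eq_zero_or_pos (τ i) with h | h
    · exact Or.inl h
    · exact Or.inr ⟨τ i - 1, ⟨by have := hτL i; omega, i, by omega⟩, by omega⟩

include hτ

lemma downs_wordOfDownEnds (k : Fin (m + 1)) :
    downs (wordOfDownEnds τ : Fin L → Bool) (τ k) = k := by
  have hpos : ∀ {i}, 0 < i → 0 < τ i := fun hi => hτ0 ▸ hτ hi
  rw [downs, Nat.count_eq_card_filter_range]
  convert (card_bij (s := Ioc 0 k) (fun i _ => τ i - 1) ?_ ?_ ?_).symm using 1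
  · simp
  · intro i hi
    rw [mem_Ioc] at hi
    have := hpos hi.1
    have := hτ.monotone hi.2
    simp only [mem_filter, mem_range, step_wordOfDownEnds_eq_neg_one_iff]
    exact ⟨by omega, by have := hτL k; omega, i, by omega⟩
  · intro i hi j hj hij
    rw [mem_Ioc] at hi hj
    have := hpos hi.1
    have := hpos hj.1
    exact hτ.injective (by omega)
  · intro j hj
    simp only [mem_filter, mem_range, step_wordOfDownEnds_eq_neg_one_iff] at hj
    obtain ⟨hjk, -, i, hi⟩ := hj
    exact ⟨i, mem_Ioc.2 ⟨hτ.lt_iff_lt.1 (by omega), hτ.le_iff_le.1 (by omega)⟩, by omega⟩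

lemma walk_wordOfDownEnds (k : Fin (m + 1)) :
    walk (wordOfDownEnds τ : Fin L → Bool) (τ k) = τ k - 2 * k := by
  rw [walk_eq _ (hτL k), downs_wordOfDownEnds hτ hτ0 hτL]

lemma downs_length_wordOfDownEnds : downs (wordOfDownEnds τ : Fin L → Bool) L = m := by
  have h := card_downEnds (wordOfDownEnds τ : Fin L → Bool)
  have : downEnds (wordOfDownEnds τ : Fin L → Bool) = univ.image τ := by
    ext t
    simp [mem_downEnds_wordOfDownEnds hτ0 hτL]
  rw [this, card_image_of_injective _ hτ.injective, card_univ, Fintype.card_fin] at h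
  omega

end WordOfDownEnds

section DownEndsEmb

variable {L m : ℕ} (v : Fin L → Bool) (hv : downs v L = m)

def downEndsEmb : Fin (m + 1) ↪o ℕ := (downEnds v).orderEmbOfFin (by rw [card_downEnds, hv])

lemma downEndsEmb_mem (i : Fin (m + 1)) : downEndsEmb v hv i ∈ downEnds v :=
  orderEmbOfFin_mem _ _ i

lemma downEndsEmb_zero : downEndsEmb v hv 0 = 0 := by
  obtain ⟨i, hi⟩ : 0 ∈ Set.range (downEndsEmb v hv) := by
    rw [downEndsEmb, range_orderEmbOfFin]
    exact mem_downEnds.2 (Or.inl rfl)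
  have := (downEndsEmb v hv).monotone (Fin.zero_le i)
  omega

lemma downEndsEmb_le (i : Fin (m + 1)) : downEndsEmb v hv i ≤ L := by
  rcases mem_downEnds.1 (downEndsEmb_mem v hv i) with h | ⟨j, hj, h⟩
  · omega
  · rw [← h]
    exact (step_eq_neg_one_iff.1 hj).1

lemma wordOfDownEnds_downEndsEmb : wordOfDownEnds (downEndsEmb v hv) = v := by
  funext p
  have hrange : (∃ i, downEndsEmb v hv i = p + 1) ↔ p.val + 1 ∈ downEnds v := by
    rw [← Set.mem_range, downEndsEmb, range_orderEmbOfFin, mem_coe]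
  have hdown : p.val + 1 ∈ downEnds v ↔ v p = false := by
    simp [mem_downEnds, step_eq_neg_one_iff]
  simp only [wordOfDownEnds, ← not_exists, hrange, hdown]
  cases v p <;> simp

lemma walk_downEndsEmb (i : Fin (m + 1)) :
    walk v (downEndsEmb v hv i) = downEndsEmb v hv i - 2 * i := by
  have := walk_wordOfDownEnds (downEndsEmb v hv).strictMono (downEndsEmb_zero v hv)
    (downEndsEmb_le v hv) i
  rwa [wordOfDownEnds_downEndsEmb] at this

lemma forall_mem_downEnds_iff {P : ℕ → Prop} :
    (∀ t ∈ downEnds v, P t) ↔ ∀ i, P (downEndsEmb v hv i) := by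
  rw [← Set.forall_mem_range (f := downEndsEmb v hv), downEndsEmb, range_orderEmbOfFin]
  rfl

variable {v hv} {τ : Fin (m + 1) → ℕ}

lemma downEndsEmb_eq (hτ : StrictMono τ) (hτ0 : τ 0 = 0) (hτL : ∀ i, τ i ≤ L)
    (h : wordOfDownEnds τ = v) : ⇑(downEndsEmb v hv) = τ := by
  subst h
  exact (orderEmbOfFin_unique _ (fun i => (mem_downEnds_wordOfDownEnds hτ0 hτL).2 ⟨i, rfl⟩) hτ).symm

end DownEndsEmb

section Circular

variable {m : ℕ}

/-- The time right after the `i`-th down step (counting from `1`; time `0` for `i = 0`) of the walk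
of `a`, whose `j`-th block of up steps has length `a (j + 1) - a j + 1`. -/
def downTime (a : Fin (m + 1) → Fin (m + 1)) (i : Fin (m + 1)) : ℕ := a i + 2 * i - a 0

def circWord (a : Fin (m + 1) → Fin (m + 1)) : Fin (2 * m + 1) → Bool :=
  wordOfDownEnds (downTime a)

lemma downTime_zero (a : Fin (m + 1) → Fin (m + 1)) : downTime a 0 = 0 := by
  simp [downTime]

variable {a : Fin (m + 1) → Fin (m + 1)} (ha : ∀ i, (a i : ℤ) - 1 ≤ a (i + 1))
include ha

lemma val_zero_le (i : Fin (m + 1)) : (a 0 : ℕ) ≤ a i + i := by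
  induction i using Fin.induction with
  | zero => simp
  | succ i ih =>
    have := ha i.castSucc
    rw [Fin.coeSucc_eq_succ] at this
    simp only [Fin.val_succ, Fin.val_castSucc] at ih ⊢
    omega

lemma downTime_cast (i : Fin (m + 1)) : (downTime a i : ℤ) = a i + 2 * i - a 0 := by
  have := val_zero_le ha i
  rw [downTime]
  omega

lemma strictMono_downTime : StrictMono (downTime a) := by
  rw [Fin.strictMono_iff_lt_succ]
  intro i
  have := ha i.castSucc
  rw [Fin.coeSucc_eq_succ] at this
  have := downTime_cast ha i.castSucc
  have := downTime_cast ha i.succ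
  simp only [Fin.val_succ, Fin.val_castSucc] at *
  omega

lemma downTime_le (i : Fin (m + 1)) : downTime a i ≤ 2 * m + 1 := by
  have hlast := ha (Fin.last m)
  rw [Fin.last_add_one] at hlast
  have := (strictMono_downTime ha).monotone (Fin.le_last i)
  have := downTime_cast ha (Fin.last m)
  simp only [Fin.val_last] at *
  omega

lemma downs_circWord : downs (circWord a) (2 * m + 1) = m :=
  downs_length_wordOfDownEnds (strictMono_downTime ha) (downTime_zero a) (downTime_le ha)

lemma val_eq_add_walk_downEndsEmb {v : Fin (2 * m + 1) → Bool} (hv : downs v (2 * m + 1) = m)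
    (hav : circWord a = v) (i : Fin (m + 1)) :
    (a i : ℤ) = a 0 + walk v (downEndsEmb v hv i) := by
  rw [downEndsEmb_eq (strictMono_downTime ha) (downTime_zero a) (downTime_le ha) hav, ← hav,
    circWord, walk_wordOfDownEnds (strictMono_downTime ha) (downTime_zero a) (downTime_le ha),
    downTime_cast ha]
  ring

end Circular

section Fiber

variable {m : ℕ} {v : Fin (2 * m + 1) → Bool} (hv : downs v (2 * m + 1) = m)

def seqOfWord (v : Fin (2 * m + 1) → Bool) (hv : downs v (2 * m + 1) = m) (h : ℤ) :
    Fin (m + 1) → Fin (m + 1) :=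
  fun i => Fin.ofNat (m + 1) (h + walk v (downEndsEmb v hv i)).toNat

include hv

lemma walkMax_sub_walkMin_le_of_downs_eq : walkMax v - walkMin v ≤ m + 1 := by
  exact_mod_cast walkMax_sub_walkMin_le v (c := m + 1) (by omega) (by omega)

lemma walk_length_eq_one : walk v (2 * m + 1) = 1 := by
  rw [walk_eq _ le_rfl, hv]
  push_cast
  ring

lemma mem_Icc_iff_forall_downEndsEmb {h : ℤ} :
    h ∈ Icc (-walkMin v) (m + 1 - walkMax v) ↔
      ∀ i, 0 ≤ h + walk v (downEndsEmb v hv i) ∧ h + walk v (downEndsEmb v hv i) ≤ m := by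
  rw [mem_Icc_iff_forall_downEnds (walk_length_eq_one hv), forall_mem_downEnds_iff v hv]

lemma seqOfWord_val {h : ℤ} (hh : h ∈ Icc (-walkMin v) (m + 1 - walkMax v)) (i : Fin (m + 1)) :
    (seqOfWord v hv h i : ℤ) = h + downEndsEmb v hv i - 2 * i := by
  have := (mem_Icc_iff_forall_downEndsEmb hv).1 hh i
  simp only [walk_downEndsEmb] at this
  simp only [seqOfWord, Fin.val_ofNat, walk_downEndsEmb]
  rw [Nat.mod_eq_of_lt (by omega)]
  omega

lemma seqOfWord_sub_one_le {h : ℤ} (hh : h ∈ Icc (-walkMin v) (m + 1 - walkMax v))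
    (i : Fin (m + 1)) :
    (seqOfWord v hv h i : ℤ) - 1 ≤ seqOfWord v hv h (i + 1) := by
  have hσ := (downEndsEmb v hv).strictMono
  induction i using Fin.lastCases with
  | last =>
    rw [Fin.last_add_one, seqOfWord_val hv hh, seqOfWord_val hv hh, downEndsEmb_zero]
    have := downEndsEmb_le v hv (Fin.last m)
    simp only [Fin.val_last, Fin.val_zero]
    omega
  | cast i =>
    rw [Fin.coeSucc_eq_succ, seqOfWord_val hv hh, seqOfWord_val hv hh]
    have := hσ (Fin.castSucc_lt_succ (i := i))
    simp only [Fin.val_succ, Fin.val_castSucc]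
    omega

lemma circWord_seqOfWord {h : ℤ} (hh : h ∈ Icc (-walkMin v) (m + 1 - walkMax v)) :
    circWord (seqOfWord v hv h) = v := by
  have hdt : downTime (seqOfWord v hv h) = downEndsEmb v hv := by
    funext i
    have := downTime_cast (seqOfWord_sub_one_le hv hh) i
    rw [seqOfWord_val hv hh, seqOfWord_val hv hh, downEndsEmb_zero] at this
    simp only [Fin.val_zero] at this
    omega
  rw [circWord, hdt, wordOfDownEnds_downEndsEmb]

lemma mem_Icc_of_circWord_eq {a : Fin (m + 1) → Fin (m + 1)}
    (ha : ∀ i, (a i : ℤ) - 1 ≤ a (i + 1)) (hav : circWord a = v) :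
    (a 0 : ℤ) ∈ Icc (-walkMin v) (m + 1 - walkMax v) := by
  refine (mem_Icc_iff_forall_downEndsEmb hv).2 fun i => ?_
  rw [← val_eq_add_walk_downEndsEmb ha hv hav]
  have := (a i).isLt
  omega

theorem card_fiber_circWord :
    #{a : Fin (m + 1) → Fin (m + 1) | (∀ i, (a i : ℤ) - 1 ≤ a (i + 1)) ∧ circWord a = v}
      = #(Icc (-walkMin v) (m + 1 - walkMax v)) := by
  refine card_bij' (fun a _ => (a 0 : ℤ)) (fun h _ => seqOfWord v hv h) ?_ ?_ ?_ ?_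
  · intro a ha
    obtain ⟨ha, hav⟩ := (mem_filter.1 ha).2
    exact mem_Icc_of_circWord_eq hv ha hav
  · intro h hh
    exact mem_filter.2 ⟨mem_univ _, seqOfWord_sub_one_le hv hh, circWord_seqOfWord hv hh⟩
  · intro a ha
    obtain ⟨ha, hav⟩ := (mem_filter.1 ha).2
    have hIcc := mem_Icc_of_circWord_eq hv ha hav
    funext i
    have := val_eq_add_walk_downEndsEmb ha hv hav i
    rw [walk_downEndsEmb] at this
    exact Fin.ext (by have := seqOfWord_val hv hIcc i; omega)
  · intro h hh
    have := seqOfWord_val hv hh 0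
    rw [downEndsEmb_zero] at this
    simpa using this

end Fiber

section Count

theorem card_circularAreaSeq_eq_sum (m : ℕ) :
    (#{a : Fin (m + 1) → Fin (m + 1) | ∀ i, (a i : ℤ) - 1 ≤ a (i + 1)} : ℤ)
      = ∑ v : Fin (2 * m + 1) → Bool with downs v (2 * m + 1) = m,
          ((m : ℤ) + 2 - (walkMax v - walkMin v)) := by
  rw [card_eq_sum_card_fiberwise (f := circWord) (t := {v | downs v (2 * m + 1) = m})
    fun a ha => by simpa using downs_circWord (mem_filter.1 ha).2]
  push_cast
  refine sum_congr rfl fun v hv => ?_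
  replace hv := (mem_filter.1 hv).2
  rw [filter_filter, card_fiber_circWord hv, Int.card_Icc,
    Int.toNat_of_nonneg (by linarith [walkMax_sub_walkMin_le_of_downs_eq hv])]
  ring

lemma sum_eq_sum_card_lt {α : Type*} (s : Finset α) (f : α → ℤ) {N : ℕ}
    (hf : ∀ a ∈ s, 0 ≤ f a ∧ f a ≤ N) :
    ∑ a ∈ s, f a = ∑ t ∈ range N, (#{a ∈ s | (t : ℤ) < f a} : ℤ) := by
  have key : ∀ a ∈ s, f a = ∑ t ∈ range N, if (t : ℤ) < f a then 1 else 0 := by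
    intro a ha
    obtain ⟨h0, hN⟩ := hf a ha
    rw [sum_boole, show {t ∈ range N | ((t : ℕ) : ℤ) < f a} = range (f a).toNat by ext; simp; omega,
      card_range, Int.toNat_of_nonneg h0]
  rw [sum_congr rfl key, sum_comm]
  simp only [sum_boole]

lemma sum_choose_upper_half (m : ℕ) :
    ∑ t ∈ range (m + 1), (2 * m + 1).choose (m + t + 1) = 4 ^ m := by
  rw [← Nat.sum_range_choose_halfway m, ← sum_range_reflect (fun j => (2 * m + 1).choose j)]
  refine sum_congr rfl fun t ht => ?_
  rw [mem_range] at ht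
  rw [← Nat.choose_symm (by omega : m + t + 1 ≤ 2 * m + 1)]
  congr 1
  omega

lemma sum_choose_upper_half_succ (m : ℕ) :
    ∑ t ∈ range (m + 1), (2 * m + 1).choose (m + 1 + t + 1) + (2 * m + 1).choose m = 4 ^ m := by
  rw [← sum_choose_upper_half m, ← Nat.choose_symm_half, sum_range_succ,
    Nat.choose_eq_zero_of_lt (by omega : 2 * m + 1 < m + 1 + m + 1), add_zero, sum_range_succ' _ m]
  congr 1
  refine sum_congr rfl fun t _ => ?_
  ring_nf

theorem sum_walkMax (m : ℕ) :
    ∑ v : Fin (2 * m + 1) → Bool with downs v (2 * m + 1) = m, walkMax v = 4 ^ m := by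
  rw [sum_eq_sum_card_lt _ _ (N := m + 1) fun v hv => ?_]
  · have h : ∑ t ∈ range (m + 1), ((2 * m + 1).choose (m + t + 1) : ℤ) = 4 ^ m := by
      exact_mod_cast sum_choose_upper_half m
    rw [← h]
    refine sum_congr rfl fun t _ => ?_
    rw [filter_filter, card_downs_eq_lt_walkMax _ _ _ (by omega)]
  · have := walkMax_sub_walkMin_le_of_downs_eq (mem_filter.1 hv).2
    exact ⟨walkMax_nonneg v, by push_cast; linarith [walkMin_nonpos v]⟩

theorem sum_walkMin (m : ℕ) :
    ∑ v : Fin (2 * m + 1) → Bool with downs v (2 * m + 1) = m, walkMin v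
      = (2 * m + 1).choose m - 4 ^ m := by
  have h : ∑ t ∈ range (m + 1), ((2 * m + 1).choose (m + 1 + t + 1) : ℤ) + (2 * m + 1).choose m
      = 4 ^ m := by
    exact_mod_cast sum_choose_upper_half_succ m
  rw [← neg_neg (∑ v ∈ _, walkMin v), ← sum_neg_distrib,
    sum_eq_sum_card_lt _ _ (N := m + 1) fun v hv => ?_]
  · rw [sum_congr rfl fun t _ => by
      rw [filter_filter, card_downs_eq_lt_neg_walkMin _ _ _ (by omega) (by omega),
        show 2 * m + 1 - m = m + 1 by omega]]
    linarith
  · have := walkMax_sub_walkMin_le_of_downs_eq (mem_filter.1 hv).2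
    exact ⟨by linarith [walkMin_nonpos v], by push_cast; linarith [walkMax_nonneg v]⟩

end Count

end CircularAreaSeq

open CircularAreaSeq

/-- The number of circular area sequences of length `n`, i.e. sequences
`(a 0, ..., a (n-1))` with values in `{0, ..., n-1}` (encoded as `Fin n`) satisfying
`a i - 1 ≤ a (i+1)` cyclically, equals `(n+2) * C(2n-1, n-1) - 2^(2n-1)`. -/
theorem circular_area_sequence_count (n : ℕ) [NeZero n] :
    ((Finset.univ.filter (fun a : Fin n → Fin n =>
        ∀ i : Fin n, (a i : ℤ) - 1 ≤ (a (i + 1) : ℤ))).card : ℤ)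
      = (n + 2) * Nat.choose (2 * n - 1) (n - 1) - 2 ^ (2 * n - 1) := by
  obtain ⟨m, rfl⟩ : ∃ m, n = m + 1 := Nat.exists_eq_succ_of_ne_zero (NeZero.ne n)
  rw [show 2 * (m + 1) - 1 = 2 * m + 1 by omega, Nat.add_sub_cancel,
    card_circularAreaSeq_eq_sum m]
  simp only [sub_sub_eq_add_sub, sum_add_distrib, sum_sub_distrib, sum_const, card_downs_eq,
    nsmul_eq_mul, sum_walkMax, sum_walkMin]
  rw [pow_succ, pow_mul]
  push_cast
  ring
end

section
/- For every area sequence a of a unit interval graph on n vertices and every sequence (v_1,...,v_n) of nonnegative integers with v_i ≤ a_i for all i, there exists a unique acyclic orientation of the graph Γ_a having exactly v_i ascending edges incident to vertex i among the edges {i→i+1, ..., i→i+a_i}. -/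
open Finset

/-- The edge set of the unit interval graph `Γ_a` on vertices `Fin n` (0-indexed):
edges `i → j` for `i < j ≤ i + a i`. -/
def uigEdges (n : ℕ) (a : Fin n → ℕ) : Finset (Fin n × Fin n) :=
  Finset.univ.filter (fun p => p.1 < p.2 ∧ (p.2 : ℕ) ≤ (p.1 : ℕ) + a p.1)

/-- The directed relation induced by an orientation of `Γ_a`, where the orientation is
encoded by the set `A` of its ascending edges (a subset of the edge set):
`u → w` if the edge `(u,w)` is oriented ascendingly, or the edge `(w,u)` is oriented
descendingly. -/
def orientRel (n : ℕ) (a : Fin n → ℕ) (A : Finset (Fin n × Fin n))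
    (u w : Fin n) : Prop :=
  (u, w) ∈ A ∨ ((w, u) ∈ uigEdges n a ∧ (w, u) ∉ A)

/-!
Existence: place the vertices into a linear order one at a time, from `n - 1` down to `0`. When
`i` is placed, its out-neighbours `i + 1, …, i + a i` are already there, so `i` can be slotted in
with exactly `v i` of them above it, and later insertions do not change this. Orienting every edge
upwards in the final order is acyclic and has the prescribed ascent counts.

Uniqueness: compare two such orientations `A`, `A'` row by row, from the top. If row `i` differs,
equal counts give `j` ascending from `i` only in `A` and `k` only in `A'`. As `i + a i` is monotone,
`j` and `k` are adjacent; their edge lies in a higher row, hence is oriented alike in `A` and `A'`,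
while the triangles through `i` force opposite orientations in the two.
-/

theorem Nat.exists_apply_eq_of_apply_le_apply_succ_add_one {f : ℕ → ℕ}
    (hf : ∀ t, f t ≤ f (t + 1) + 1) {v M : ℕ} (h0 : v ≤ f 0) (hM : f M ≤ v) :
    ∃ t, f t = v := by
  induction M with
  | zero => exact ⟨0, le_antisymm hM h0⟩
  | succ M ih =>
    by_cases hle : f M ≤ v
    · exact ih hle
    · exact ⟨M + 1, by linarith [hf M]⟩

theorem Finset.exists_card_filter_le_eq {ι : Type*} [DecidableEq ι] (S : Finset ι)
    {r : ι → ℕ} (hr : Set.InjOn r S) {v : ℕ} (hv : v ≤ #S) :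
    ∃ t, #{j ∈ S | t ≤ r j} = v := by
  refine Nat.exists_apply_eq_of_apply_le_apply_succ_add_one (fun t => ?_) (M := S.sup r + 1)
    (by simpa using hv) ?_
  · have hsub : {j ∈ S | t ≤ r j} ⊆ {j ∈ S | t + 1 ≤ r j} ∪ {j ∈ S | r j = t} := by
      intro j hj
      simp only [mem_filter, mem_union] at hj ⊢
      rcases hj.2.eq_or_lt with h | h <;> [exact .inr ⟨hj.1, h.symm⟩; exact .inl ⟨hj.1, h⟩]
    have hle : #{j ∈ S | r j = t} ≤ 1 := card_le_one.2 fun x hx y hy => by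
      simp only [mem_filter] at hx hy
      exact hr hx.1 hy.1 (hx.2.trans hy.2.symm)
    linarith [card_le_card hsub, card_union_le {j ∈ S | t + 1 ≤ r j} {j ∈ S | r j = t}]
  · have hempty : {j ∈ S | S.sup r + 1 ≤ r j} = ∅ :=
      filter_false_of_mem fun j hj => not_le.2 (Nat.lt_succ_of_le (le_sup hj))
    simp only [hempty, card_empty, zero_le]

theorem Finset.card_filter_fst_eq {α β : Type*} [DecidableEq α] [DecidableEq β] [Fintype β]
    (s : Finset (α × β)) (a : α) : #{p ∈ s | p.1 = a} = #{b | (a, b) ∈ s} := by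
  refine card_nbij' Prod.snd (fun b => (a, b)) ?_ ?_ ?_ ?_
  · rintro ⟨x, y⟩ h
    obtain ⟨h, rfl⟩ := mem_filter.1 h
    simpa using h
  · intro b hb
    simpa using hb
  · rintro ⟨x, y⟩ h
    obtain ⟨-, rfl⟩ := mem_filter.1 h
    rfl
  · exact fun _ _ => rfl

theorem Relation.not_of_irrefl_transGen {α : Type*} {R : α → α → Prop}
    (hR : ∀ x, ¬ Relation.TransGen R x x) {x y z : α} (hxy : R x y) (hzx : R z x) :
    ¬ R y z :=
  fun hyz => hR x (.tail (.tail (.single hxy) hyz) hzx)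

theorem Relation.not_transGen_self_of_map_lt {α β : Type*} [Preorder β] {R : α → α → Prop}
    (f : α → β) (hf : ∀ x y, R x y → f x < f y) (x : α) : ¬ Relation.TransGen R x x := by
  intro hx
  have := Relation.TransGen.lift f hf x x hx
  rw [Function.onFun, Relation.transGen_eq_self] at this
  exact lt_irrefl _ this

theorem Finset.exists_injOn_card_filter_lt_eq {ι : Type*} [LinearOrder ι] (N : ι → Finset ι)
    (hN : ∀ i, ∀ j ∈ N i, i < j) (v : ι → ℕ) (hv : ∀ i, v i ≤ #(N i)) (s : Finset ι)
    (hs : ∀ i ∈ s, N i ⊆ s) :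
    ∃ r : ι → ℕ, Set.InjOn r s ∧ ∀ i ∈ s, #{j ∈ N i | r i < r j} = v i := by
  induction s using Finset.induction_on_min with
  | empty => exact ⟨fun _ => 0, by simp, by simp⟩
  | insert a s ha ih =>
    have has : a ∉ s := fun h => lt_irrefl a (ha a h)
    have hNa : N a ⊆ s := fun j hj =>
      (mem_insert.1 (hs a (mem_insert_self a s) hj)).resolve_left (hN a j hj).ne'
    have hNs : ∀ i ∈ s, N i ⊆ s := fun i hi j hj =>
      (mem_insert.1 (hs i (mem_insert_of_mem hi) hj)).resolve_left ((ha i hi).trans (hN i j hj)).ne'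
    obtain ⟨r, hr, hcard⟩ := ih hNs
    obtain ⟨t, ht⟩ := (N a).exists_card_filter_le_eq (hr.mono hNa) (hv a)
    have hne : ∀ x ∈ s, x ≠ a := fun x hx h => has (h ▸ hx)
    -- Doubling keeps the order on `s`; the even value `2 * t` falls just below `2 * r j + 1`
    -- exactly when `t ≤ r j`.
    refine ⟨fun x => if x = a then 2 * t else 2 * r x + 1, ?_, ?_⟩
    · rw [coe_insert, Set.injOn_insert (mod_cast has)]
      refine ⟨fun x hx y hy hxy => hr hx hy ?_, ?_⟩
      · simp only [hne x hx, hne y hy, if_false] at hxy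
        omega
      · rintro ⟨x, hx, hxa⟩
        simp only [hne x hx, if_false, if_true] at hxa
        omega
    · intro i hi
      rcases mem_insert.1 hi with rfl | hi
      · rw [← ht]
        refine congrArg card (filter_congr fun j hj => ?_)
        simp only [if_true, hne j (hNa hj), if_false]
        omega
      · rw [← hcard i hi]
        refine congrArg card (filter_congr fun j hj => ?_)
        simp only [hne i hi, hne j (hNs i hi hj), if_false]
        omega

section UnitIntervalGraph

variable {n : ℕ} {a : Fin n → ℕ}

@[simp]
theorem mem_uigEdges {i j : Fin n} :
    (i, j) ∈ uigEdges n a ↔ i < j ∧ (j : ℕ) ≤ i + a i := by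
  simp [uigEdges]

theorem card_uigEdges_row (harea₁ : ∀ i : Fin n, (i : ℕ) + a i < n) (i : Fin n) :
    #{j | (i, j) ∈ uigEdges n a} = a i := by
  have hrow : ({j | (i, j) ∈ uigEdges n a} : Finset (Fin n)) =
      Ioc i ⟨i + a i, harea₁ i⟩ := by
    ext j
    simp [Fin.le_def]
  rw [hrow, Fin.card_Ioc]
  exact Nat.add_sub_cancel_left _ _

theorem exists_acyclic_orientation_card_row_eq (harea₁ : ∀ i : Fin n, (i : ℕ) + a i < n)
    (v : Fin n → ℕ) (hv : ∀ i, v i ≤ a i) :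
    ∃ A ⊆ uigEdges n a, (∀ x, ¬ Relation.TransGen (orientRel n a A) x x) ∧
      ∀ i, #{p ∈ A | p.1 = i} = v i := by
  obtain ⟨r, hr, hcard⟩ :=
    exists_injOn_card_filter_lt_eq (fun i => {j | (i, j) ∈ uigEdges n a})
    (fun i j hj => (mem_uigEdges.1 (mem_filter.1 hj).2).1) v
    (fun i => (card_uigEdges_row harea₁ i).symm ▸ hv i) univ (fun _ _ => subset_univ _)
  refine ⟨{p ∈ uigEdges n a | r p.1 < r p.2}, filter_subset _ _,
    Relation.not_transGen_self_of_map_lt r ?_, fun i => ?_⟩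
  · rintro u w (h | ⟨hE, hA⟩)
    · exact (mem_filter.1 h).2
    · have hwu : w ≠ u := (mem_uigEdges.1 hE).1.ne
      have hr' : r w ≠ r u := fun h => hwu (hr (mem_univ w) (mem_univ u) h)
      simp only [mem_filter, hE, true_and, not_lt] at hA
      omega
  · rw [card_filter_fst_eq, ← hcard i (mem_univ i)]
    congr 1
    ext j
    simp

theorem add_area_mono (harea₂ : ∀ i j : Fin n, (i : ℕ) + 1 = (j : ℕ) → a i ≤ a j + 1) :
    Monotone fun i : Fin n => (i : ℕ) + a i := by
  cases n with
  | zero => exact fun i => i.elim0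
  | succ n =>
    refine Fin.monotone_iff_le_succ.2 fun i => ?_
    have := harea₂ i.castSucc i.succ (by simp)
    simp only [Fin.val_castSucc, Fin.val_succ]
    omega

theorem mem_uigEdges_of_mem_of_mem
    (harea₂ : ∀ i j : Fin n, (i : ℕ) + 1 = (j : ℕ) → a i ≤ a j + 1)
    {i j k : Fin n} (hij : (i, j) ∈ uigEdges n a) (hik : (i, k) ∈ uigEdges n a) (hjk : j < k) :
    (j, k) ∈ uigEdges n a := by
  rw [mem_uigEdges] at *
  exact ⟨hjk, hik.2.trans (add_area_mono harea₂ hij.1.le)⟩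

theorem not_row_exchange (harea₂ : ∀ i j : Fin n, (i : ℕ) + 1 = (j : ℕ) → a i ≤ a j + 1)
    {A A' : Finset (Fin n × Fin n)} (hA : A ⊆ uigEdges n a) (hA' : A' ⊆ uigEdges n a)
    (hacyc : ∀ x, ¬ Relation.TransGen (orientRel n a A) x x)
    (hacyc' : ∀ x, ¬ Relation.TransGen (orientRel n a A') x x) {i j k : Fin n}
    (hrow : ∀ x, i < x → ∀ y, (x, y) ∈ A ↔ (x, y) ∈ A') (hjk : j < k) :
    ¬ ((i, j) ∈ A ∧ (i, j) ∉ A' ∧ (i, k) ∈ A' ∧ (i, k) ∉ A) := by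
  rintro ⟨hjA, hjA', hkA', hkA⟩
  have hij := hA hjA
  have hik := hA' hkA'
  have hjk_notMem : (j, k) ∉ A := fun h =>
    Relation.not_of_irrefl_transGen hacyc (.inl hjA) (.inr ⟨hik, hkA⟩) (.inl h)
  have hjk_mem : (j, k) ∈ A' := by
    by_contra h
    exact Relation.not_of_irrefl_transGen hacyc' (.inl hkA') (.inr ⟨hij, hjA'⟩)
      (.inr ⟨mem_uigEdges_of_mem_of_mem harea₂ hij hik hjk, h⟩)
  exact hjk_notMem ((hrow j (mem_uigEdges.1 hij).1 k).2 hjk_mem)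

theorem mem_of_mem_of_rows_gt
    (harea₂ : ∀ i j : Fin n, (i : ℕ) + 1 = (j : ℕ) → a i ≤ a j + 1)
    {A A' : Finset (Fin n × Fin n)} (hA : A ⊆ uigEdges n a) (hA' : A' ⊆ uigEdges n a)
    (hacyc : ∀ x, ¬ Relation.TransGen (orientRel n a A) x x)
    (hacyc' : ∀ x, ¬ Relation.TransGen (orientRel n a A') x x) {i j : Fin n}
    (hcard : #{p ∈ A | p.1 = i} = #{p ∈ A' | p.1 = i})
    (hrow : ∀ x, i < x → ∀ y, (x, y) ∈ A ↔ (x, y) ∈ A') (hj : (i, j) ∈ A) :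
    (i, j) ∈ A' := by
  by_contra hj'
  have hsub : ¬ {p ∈ A' | p.1 = i} ⊆ {p ∈ A | p.1 = i} := fun hsub => by
    have hij : (i, j) ∈ {p ∈ A | p.1 = i} := mem_filter.2 ⟨hj, rfl⟩
    rw [← eq_of_subset_of_card_le hsub hcard.le] at hij
    exact hj' (mem_filter.1 hij).1
  obtain ⟨⟨i', k⟩, hk_row', hk_row⟩ := not_subset.1 hsub
  obtain ⟨hk', hi' : i' = i⟩ := mem_filter.1 hk_row'
  rw [hi'] at hk' hk_row
  have hk : (i, k) ∉ A := fun h => hk_row (mem_filter.2 ⟨h, rfl⟩)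
  rcases lt_trichotomy j k with hjk | rfl | hkj
  · exact not_row_exchange harea₂ hA hA' hacyc hacyc' hrow hjk ⟨hj, hj', hk', hk⟩
  · exact hk hj
  · exact not_row_exchange harea₂ hA' hA hacyc' hacyc (fun x hx y => (hrow x hx y).symm) hkj
      ⟨hk', hk, hj, hj'⟩

theorem eq_of_acyclic_of_card_row_eq
    (harea₂ : ∀ i j : Fin n, (i : ℕ) + 1 = (j : ℕ) → a i ≤ a j + 1)
    {A A' : Finset (Fin n × Fin n)} (hA : A ⊆ uigEdges n a) (hA' : A' ⊆ uigEdges n a)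
    (hacyc : ∀ x, ¬ Relation.TransGen (orientRel n a A) x x)
    (hacyc' : ∀ x, ¬ Relation.TransGen (orientRel n a A') x x)
    (hcard : ∀ i, #{p ∈ A | p.1 = i} = #{p ∈ A' | p.1 = i}) : A = A' := by
  suffices h : ∀ i j, (i, j) ∈ A ↔ (i, j) ∈ A' from ext fun p => h p.1 p.2
  intro i
  induction i using WellFoundedGT.induction with
  | _ i ih =>
    exact fun j => ⟨mem_of_mem_of_rows_gt harea₂ hA hA' hacyc hacyc' (hcard i) ih,
      mem_of_mem_of_rows_gt harea₂ hA' hA hacyc' hacyc (hcard i).symm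
        (fun x hx y => (ih x hx y).symm)⟩

end UnitIntervalGraph

/-- for every area sequence `a` and every `v` with `v i ≤ a i`, there is a
unique acyclic orientation of `Γ_a` with exactly `v i` ascending edges in row `i`. -/
theorem unique_acyclic_orientation (n : ℕ) (a : Fin n → ℕ)
    (harea₁ : ∀ i : Fin n, (i : ℕ) + a i < n)
    (harea₂ : ∀ i j : Fin n, (i : ℕ) + 1 = (j : ℕ) → a i ≤ a j + 1)
    (v : Fin n → ℕ) (hv : ∀ i, v i ≤ a i) :
    ∃! A : Finset (Fin n × Fin n), A ⊆ uigEdges n a ∧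
      (∀ x : Fin n, ¬ Relation.TransGen (orientRel n a A) x x) ∧
      (∀ i : Fin n, (A.filter (fun p => p.1 = i)).card = v i) := by
  obtain ⟨A, hA, hacyc, hcard⟩ := exists_acyclic_orientation_card_row_eq harea₁ v hv
  refine ⟨A, ⟨hA, hacyc, hcard⟩, fun A' ⟨hA', hacyc', hcard'⟩ => ?_⟩
  exact eq_of_acyclic_of_card_row_eq harea₂ hA' hA hacyc' hacyc
    fun i => (hcard' i).trans (hcard i).symm
end

section
/- Let a = (a_1,...,a_n) be the area sequence of a unit interval graph (row lengths of inner boxes of a Dyck path) and let b = (b_1,...,b_n) be the corresponding column area sequence (column lengths of the inner shape). Then b is a permutation of a, i.e. the multisets {a_1,...,a_n} and {b_1,...,b_n} coincide. -/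
open Finset

/-!
Write `b` for the column area sequence. Since `a i ≤ a (i + 1) + 1`, the last column `i + a i`
reached by row `i` is monotone in `i`, so the rows reaching column `j` from below form an
interval ending at `j - 1`. Hence `b j ≥ k` exactly when row `j - k` reaches column `j`, i.e.
when `a (j - k) ≥ k`, and the shift `i ↦ i + k` matches the rows with `a i ≥ k` with the
columns with `b j ≥ k`. A multiset of naturals is determined by these tail counts.
-/

theorem Multiset.eq_of_forall_card_filter_le_eq {s t : Multiset ℕ}
    (h : ∀ k, card (s.filter (k ≤ ·)) = card (t.filter (k ≤ ·))) : s = t := by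
  have tail_split (u : Multiset ℕ) (v : ℕ) :
      card (u.filter (v ≤ ·)) = u.count v + card (u.filter (v + 1 ≤ ·)) := by
    rw [Multiset.count_eq_card_filter_eq, ← Multiset.card_add,
      ← Multiset.filter_add_not (v + 1 ≤ ·) (u.filter (v ≤ ·)),
      Multiset.filter_filter, Multiset.filter_filter, add_comm]
    congr 3 <;> ext x <;> omega
  ext v
  have hv := tail_split s v
  have hv' := tail_split t v
  rw [h v, h (v + 1)] at hv
  omega

namespace AreaSequence

variable {n : ℕ} {a : Fin n → ℕ}

theorem monotone_add_of_le_succ_add_one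
    (h : ∀ i j : Fin n, (i : ℕ) + 1 = (j : ℕ) → a i ≤ a j + 1) :
    Monotone fun i : Fin n => (i : ℕ) + a i := by
  cases n with
  | zero => exact fun i => i.elim0
  | succ n =>
    refine Fin.monotone_iff_le_succ.mpr fun i => ?_
    have := h i.castSucc i.succ (by simp)
    simp only [Fin.val_castSucc, Fin.val_succ]
    omega

def colArea (a : Fin n → ℕ) (j : Fin n) : ℕ :=
  #{i | i < j ∧ (j : ℕ) ≤ i + a i}

theorem colArea_le (a : Fin n → ℕ) (j : Fin n) : colArea a j ≤ j :=
  (card_le_card fun i hi => by simp_all).trans_eq (Fin.card_Iio j)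

theorem le_colArea_iff (hmono : Monotone fun i : Fin n => (i : ℕ) + a i) (k : ℕ) (j : Fin n) :
    k ≤ colArea a j ↔ ∃ i : Fin n, (i : ℕ) + k = j ∧ k ≤ a i := by
  constructor
  · intro hk
    have hkj : k ≤ j := hk.trans (colArea_le a j)
    obtain ⟨i₀, hi₀⟩ : ∃ i₀ : Fin n, (i₀ : ℕ) + k = j :=
      ⟨⟨j - k, by omega⟩, Nat.sub_add_cancel hkj⟩
    refine ⟨i₀, hi₀, ?_⟩
    by_contra! hlt
    -- every row reaching column `j` lies strictly below row `i₀`, which stops short of it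
    have hsub : ({i | i < j ∧ (j : ℕ) ≤ i + a i} : Finset (Fin n)) ⊆ Ioo i₀ j := by
      intro i hi
      simp only [mem_filter, mem_univ, true_and] at hi
      refine mem_Ioo.mpr ⟨lt_of_not_ge fun hle => ?_, hi.1⟩
      have : (i : ℕ) + a i ≤ i₀ + a i₀ := hmono hle
      omega
    have := (card_le_card hsub).trans_eq (Fin.card_Ioo _ _)
    simp only [colArea] at hk
    omega
  · rintro ⟨i, hij, hk⟩
    have hsub : Ico i j ⊆ ({l | l < j ∧ (j : ℕ) ≤ l + a l} : Finset (Fin n)) := by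
      intro l hl
      obtain ⟨hil, hlj⟩ := mem_Ico.mp hl
      have : (i : ℕ) + a i ≤ l + a l := hmono hil
      simp only [mem_filter, mem_univ, true_and]
      exact ⟨hlj, by omega⟩
    have := (Fin.card_Ico _ _).symm.trans_le (card_le_card hsub)
    simp only [colArea]
    omega

theorem card_le_colArea_eq (harea : ∀ i : Fin n, (i : ℕ) + a i < n)
    (hmono : Monotone fun i : Fin n => (i : ℕ) + a i) (k : ℕ) :
    #{j | k ≤ colArea a j} = #{i | k ≤ a i} := by
  simp_rw [le_colArea_iff hmono]
  symm
  refine card_bij (fun i hi => ⟨i + k, ?_⟩) ?_ ?_ ?_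
  · have := harea i
    simp only [mem_filter, mem_univ, true_and] at hi
    omega
  · intro i hi
    simp only [mem_filter, mem_univ, true_and] at hi ⊢
    exact ⟨i, rfl, hi⟩
  · intro i₁ _ i₂ _ h
    exact Fin.ext (by simpa using congrArg Fin.val h)
  · intro j hj
    simp only [mem_filter, mem_univ, true_and] at hj
    obtain ⟨i, hij, hk⟩ := hj
    exact ⟨i, by simpa using hk, Fin.ext hij⟩

end AreaSequence

open AreaSequence in
/-- the column area sequence of a Dyck path is a permutation of its row area
sequence.  Here the inner boxes of the Dyck diagram of the area sequence `a` (0-indexed)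
are the cells `(i,j)` with `i < j ≤ i + a i`; row `i` contains `a i` of them and column
`j` contains `b j = #{i | i < j ≤ i + a i}` of them.  The two multisets coincide. -/
theorem row_column_area_sequences_multiset_eq (n : ℕ) (a : Fin n → ℕ)
    (harea₁ : ∀ i : Fin n, (i : ℕ) + a i < n)
    (harea₂ : ∀ i j : Fin n, (i : ℕ) + 1 = (j : ℕ) → a i ≤ a j + 1) :
    Multiset.map a Finset.univ.val
      = Multiset.map
          (fun j : Fin n =>
            (Finset.univ.filter (fun i : Fin n => i < j ∧ (j : ℕ) ≤ (i : ℕ) + a i)).card)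
          Finset.univ.val := by
  have hmono := monotone_add_of_le_succ_add_one harea₂
  refine Multiset.eq_of_forall_card_filter_le_eq fun k => ?_
  simp only [Multiset.filter_map, Multiset.card_map]
  exact (card_le_colArea_eq harea₁ hmono k).symm
end

section
/- For a connected unit interval graph Γ_a on n vertices, the sum of q^{asc(θ)} over all acyclic orientations θ of Γ_a whose unique sink is vertex 1 equals the product over i from 1 to n-1 of the q-integer [a_i]_q (equivalently, the product of [b_i]_q over the column area sequence b). -/
open Finset Polynomial

open scoped Classical

/-!
Add the vertices in the order `0, 1, …, n - 1`. The earlier neighbours of a new vertex `j` form a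
clique of size `b_j`, on which an acyclic orientation induces a linear order. In an orientation
with unique sink `0`, the vertex `j` must keep an out-neighbour in that clique, and the vertices
pointing to `j` (its new ascending edges) form a proper upper set of the order; conversely every
such choice extends an orientation of the smaller graph. A chain of `b_j` elements has exactly one
upper set of each size `0, …, b_j - 1`, which gives the factor `[b_j]_q`. Finally the column
lengths `b_j` and the row lengths `a_i` have the same multiset, since for every `k ≥ 1` both count
the edges `{i, i + k}`.
-/

open Relation

namespace SinkOrientation

variable {α β : Type*}

section Relations

variable {r s : α → α → Prop}

theorem transGen_map_of_injective {f : α → β} (hf : Function.Injective f) {c d : β}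
    (h : TransGen (Relation.Map r f f) c d) : Relation.Map (TransGen r) f f c d := by
  induction h with
  | single h =>
    obtain ⟨a, b, hab, rfl, rfl⟩ := h
    exact ⟨a, b, .single hab, rfl, rfl⟩
  | tail _ h ih =>
    obtain ⟨a, b, hab, rfl, rfl⟩ := ih
    obtain ⟨b', c, hbc, hb, rfl⟩ := h
    rw [hf hb] at hbc
    exact ⟨a, c, hab.tail hbc, rfl, rfl⟩

theorem acyclic_map_iff {f : α → β} (hf : Function.Injective f) :
    (∀ y, ¬ TransGen (Relation.Map r f f) y y) ↔ ∀ x, ¬ TransGen r x x := by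
  refine ⟨fun h x hx => h (f x) (hx.lift f fun a b hab => ⟨a, b, hab, rfl, rfl⟩), fun h y hy => ?_⟩
  obtain ⟨a, b, hab, rfl, hba⟩ := transGen_map_of_injective hf hy
  rw [hf hba] at hab
  exact h a hab

theorem forall_not_map_iff {f : α → β} (hf : Function.Injective f) (x : α) :
    (∀ y, ¬ Relation.Map r f f (f x) y) ↔ ∀ y, ¬ r x y := by
  refine ⟨fun h y hxy => h (f y) ⟨x, y, hxy, rfl, rfl⟩, ?_⟩
  rintro h _ ⟨a, b, hab, ha, rfl⟩
  rw [hf ha] at hab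
  exact h b hab

/-- `s` is `r` plus a vertex `v` whose two-step paths `x → v → y` are short-circuited in `r`. -/
theorem acyclic_of_bypass (v : α) (hr : ∀ x, ¬ TransGen r x x)
    (hsr : ∀ x y, x ≠ v → y ≠ v → s x y → r x y) (hsv : ¬ s v v)
    (hbypass : ∀ x y, s x v → s v y → r x y) : ∀ x, ¬ TransGen s x x := by
  have key : ∀ x y, x ≠ v → TransGen s x y →
      (y ≠ v → TransGen r x y) ∧ (y = v → ∃ t, s t v ∧ ReflTransGen r x t) := by
    intro x y hx h
    induction h with
    | single h => exact ⟨fun hy => .single (hsr _ _ hx hy h), fun hy => ⟨x, hy ▸ h, .refl⟩⟩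
    | @tail y z _ hyz ih =>
      rcases eq_or_ne y v with rfl | hy
      · obtain ⟨t, htv, hxt⟩ := ih.2 rfl
        exact ⟨fun _ => TransGen.tail' hxt (hbypass t z htv hyz), fun hz => (hsv (hz ▸ hyz)).elim⟩
      · have hxy := ih.1 hy
        exact ⟨fun hz => hxy.tail (hsr y z hy hz hyz),
          fun hz => ⟨y, hz ▸ hyz, hxy.to_reflTransGen⟩⟩
  have off_v : ∀ x, x ≠ v → ¬ TransGen s x x := fun x hx hxx => hr x ((key x x hx hxx).1 hx)
  intro x hx
  rcases eq_or_ne x v with rfl | hxv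
  · obtain ⟨y, hxy, hyx⟩ := TransGen.head'_iff.mp hx
    have hyx' : y ≠ x := fun h => hsv (h ▸ hxy)
    exact off_v y hyx' (TransGen.tail' hyx hxy)
  · exact off_v x hxv hx

end Relations

section Chain

variable (r : α → α → Prop) (N : Finset α)

noncomputable def outDegreeIn (v : α) : ℕ := #(N.filter (r v ·))

noncomputable def topSegment (c : ℕ) : Finset α := N.filter fun v => #N - c ≤ outDegreeIn r N v

noncomputable def properUpperSets [DecidableEq α] : Finset (Finset α) :=
  N.ssubsets.filter fun T => ∀ u ∈ T, ∀ w ∈ N \ T, r u w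

variable {r N}

theorem outDegreeIn_lt_outDegreeIn (hr : ∀ x, ¬ TransGen r x x)
    (htot : ∀ u ∈ N, ∀ w ∈ N, u ≠ w → r u w ∨ r w u) {u w : α} (hu : u ∈ N) (hw : w ∈ N)
    (huw : r u w) : outDegreeIn r N w < outDegreeIn r N u := by
  refine card_lt_card ⟨fun x hx => ?_, fun hsub => ?_⟩
  · rw [mem_filter] at hx ⊢
    refine ⟨hx.1, (htot u hu x hx.1 ?_).resolve_right fun hxu => hr u ?_⟩
    · rintro rfl
      exact hr u (.head huw (.single hx.2))
    · exact .head huw (.head hx.2 (.single hxu))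
  · exact hr w (.single (mem_filter.mp (hsub (mem_filter.mpr ⟨hw, huw⟩))).2)

theorem outDegreeIn_lt_card (hr : ∀ x, ¬ TransGen r x x) {v : α} (hv : v ∈ N) :
    outDegreeIn r N v < #N :=
  card_lt_card ⟨filter_subset _ _, fun hsub => hr v (.single (mem_filter.mp (hsub hv)).2)⟩

theorem injOn_outDegreeIn (hr : ∀ x, ¬ TransGen r x x)
    (htot : ∀ u ∈ N, ∀ w ∈ N, u ≠ w → r u w ∨ r w u) : Set.InjOn (outDegreeIn r N) N := by
  intro u hu w hw huw
  by_contra hne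
  rcases htot u hu w hw hne with h | h
  · exact (outDegreeIn_lt_outDegreeIn hr htot hu hw h).ne huw.symm
  · exact (outDegreeIn_lt_outDegreeIn hr htot hw hu h).ne huw

theorem image_outDegreeIn (hr : ∀ x, ¬ TransGen r x x)
    (htot : ∀ u ∈ N, ∀ w ∈ N, u ≠ w → r u w ∨ r w u) :
    N.image (outDegreeIn r N) = range #N := by
  refine eq_of_subset_of_card_le (fun k hk => ?_) ?_
  · obtain ⟨v, hv, rfl⟩ := mem_image.mp hk
    exact mem_range.mpr (outDegreeIn_lt_card hr hv)
  · rw [card_range, card_image_of_injOn (injOn_outDegreeIn hr htot)]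

theorem card_topSegment (hr : ∀ x, ¬ TransGen r x x)
    (htot : ∀ u ∈ N, ∀ w ∈ N, u ≠ w → r u w ∨ r w u) {c : ℕ} (hc : c ≤ #N) :
    #(topSegment r N c) = c := by
  have himage : (topSegment r N c).image (outDegreeIn r N) = Ico (#N - c) #N := by
    rw [topSegment, ← filter_image, image_outDegreeIn hr htot]
    ext k
    simp only [mem_filter, mem_range, mem_Ico]
    omega
  have hinj : Set.InjOn (outDegreeIn r N) (topSegment r N c) :=
    (injOn_outDegreeIn hr htot).mono (filter_subset _ _)
  rw [← card_image_of_injOn hinj, himage, Nat.card_Ico]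
  omega

theorem topSegment_mem_properUpperSets [DecidableEq α] (hr : ∀ x, ¬ TransGen r x x)
    (htot : ∀ u ∈ N, ∀ w ∈ N, u ≠ w → r u w ∨ r w u) {c : ℕ} (hc : c < #N) :
    topSegment r N c ∈ properUpperSets r N := by
  refine mem_filter.mpr
    ⟨mem_ssubsets.mpr (Finset.ssubset_iff_subset_ne.mpr ⟨filter_subset _ _, ?_⟩), ?_⟩
  · intro h
    have := card_topSegment hr htot hc.le
    rw [h] at this
    omega
  · intro u hu w hw
    obtain ⟨hwN, hwu⟩ := mem_sdiff.mp hw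
    obtain ⟨huN, hudeg⟩ := mem_filter.mp hu
    refine (htot u huN w hwN fun h => hwu (h ▸ hu)).resolve_right fun h => hwu ?_
    exact mem_filter.mpr ⟨hwN, hudeg.trans (outDegreeIn_lt_outDegreeIn hr htot hwN huN h).le⟩

theorem topSegment_card_of_mem_properUpperSets [DecidableEq α] (hr : ∀ x, ¬ TransGen r x x)
    {T : Finset α} (hT : T ∈ properUpperSets r N) : topSegment r N #T = T := by
  obtain ⟨hTN, hsep⟩ := mem_filter.mp hT
  have hTN := (mem_ssubsets.mp hTN).subset
  have high : ∀ u ∈ T, #N - #T ≤ outDegreeIn r N u := fun u hu => by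
    rw [← card_sdiff_of_subset hTN]
    exact card_le_card fun w hw => mem_filter.mpr ⟨(mem_sdiff.mp hw).1, hsep u hu w hw⟩
  have low : ∀ w ∈ N \ T, outDegreeIn r N w < #N - #T := fun w hw => by
    rw [← card_sdiff_of_subset hTN]
    refine card_lt_card ⟨fun x hx => ?_, fun hsub => ?_⟩
    · obtain ⟨hxN, hwx⟩ := mem_filter.mp hx
      refine mem_sdiff.mpr ⟨hxN, fun hxT => hr w (.head hwx (.single (hsep x hxT w hw)))⟩
    · exact hr w (.single (mem_filter.mp (hsub hw)).2)
  ext v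
  simp only [topSegment, mem_filter]
  refine ⟨fun ⟨hvN, hv⟩ => ?_, fun hvT => ⟨hTN hvT, high v hvT⟩⟩
  by_contra hvT
  exact absurd hv (not_le.mpr (low v (mem_sdiff.mpr ⟨hvN, hvT⟩)))

theorem sum_properUpperSets {R : Type*} [CommSemiring R] [DecidableEq α]
    (hr : ∀ x, ¬ TransGen r x x) (htot : ∀ u ∈ N, ∀ w ∈ N, u ≠ w → r u w ∨ r w u) (q : R) :
    ∑ T ∈ properUpperSets r N, q ^ #T = ∑ k ∈ range #N, q ^ k := by
  refine sum_nbij' card (topSegment r N) (fun T hT => ?_)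
    (fun c hc => topSegment_mem_properUpperSets hr htot (mem_range.mp hc))
    (fun T hT => topSegment_card_of_mem_properUpperSets hr hT)
    (fun c hc => card_topSegment hr htot (mem_range.mp hc).le) fun _ _ => rfl
  exact mem_range.mpr (card_lt_card (mem_ssubsets.mp (mem_filter.mp hT).1))

end Chain

section Orientations

/-- The orientation of the edge set `E` (pairs `(i, j)` standing for edges `i — j`) in which
exactly the edges of `A` point from their first to their second vertex;
`orientRel n a = orient (uigEdges n a)`. -/
def orient (E A : Finset (α × α)) (u w : α) : Prop :=
  (u, w) ∈ A ∨ ((w, u) ∈ E ∧ (w, u) ∉ A)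

noncomputable def sinkOrientations (V : Finset α) (E : Finset (α × α)) (s : α) :
    Finset (Finset (α × α)) :=
  E.powerset.filter fun A =>
    (∀ x, ¬ TransGen (orient E A) x x) ∧ ∀ x ∈ V, (∀ y, ¬ orient E A x y) ↔ x = s

theorem mem_sinkOrientations {V : Finset α} {E A : Finset (α × α)} {s : α} :
    A ∈ sinkOrientations V E s ↔ A ⊆ E ∧ (∀ x, ¬ TransGen (orient E A) x x) ∧
      ∀ x ∈ V, (∀ y, ¬ orient E A x y) ↔ x = s := by
  rw [sinkOrientations, mem_filter, mem_powerset]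

theorem orient_or_orient {E A : Finset (α × α)} {u w : α} (h : (u, w) ∈ E ∨ (w, u) ∈ E) :
    orient E A u w ∨ orient E A w u := by
  rcases h with h | h <;> by_cases hA : (u, w) ∈ A <;> by_cases hA' : (w, u) ∈ A <;>
    simp_all [orient]

theorem orient_map (e : α ↪ β) (E A : Finset (α × α)) :
    orient (E.map (e.prodMap e)) (A.map (e.prodMap e)) = Relation.Map (orient E A) e e := by
  ext x y
  simp only [orient, Relation.Map, mem_map, Function.Embedding.coe_prodMap, Prod.exists,
    Prod.map_apply, Prod.mk.injEq]
  constructor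
  · rintro (⟨a, b, hab, rfl, rfl⟩ | ⟨⟨b, a, hba, rfl, rfl⟩, hA⟩)
    · exact ⟨a, b, .inl hab, rfl, rfl⟩
    · exact ⟨a, b, .inr ⟨hba, fun h => hA ⟨b, a, h, rfl, rfl⟩⟩, rfl, rfl⟩
  · rintro ⟨a, b, hab | ⟨hba, hA⟩, rfl, rfl⟩
    · exact .inl ⟨a, b, hab, rfl, rfl⟩
    · refine .inr ⟨⟨b, a, hba, rfl, rfl⟩, fun ⟨b', a', h, hb, ha⟩ => hA ?_⟩
      rwa [e.injective hb, e.injective ha] at h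

theorem map_mem_sinkOrientations_iff (e : α ↪ β) {V : Finset α} {E A : Finset (α × α)} {s : α} :
    A.map (e.prodMap e) ∈ sinkOrientations (V.map e) (E.map (e.prodMap e)) (e s) ↔
      A ∈ sinkOrientations V E s := by
  simp only [sinkOrientations, mem_filter, mem_powerset, map_subset_map, orient_map,
    acyclic_map_iff e.injective, forall_mem_map, forall_not_map_iff e.injective, e.injective.eq_iff]

theorem sinkOrientations_map (e : α ↪ β) (V : Finset α) (E : Finset (α × α)) (s : α) :
    sinkOrientations (V.map e) (E.map (e.prodMap e)) (e s) =
      (sinkOrientations V E s).map (mapEmbedding (e.prodMap e)).toEmbedding := by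
  ext B
  simp only [mem_map, RelEmbedding.coe_toEmbedding, mapEmbedding_apply]
  constructor
  · intro hB
    obtain ⟨A, -, rfl⟩ := subset_map_iff.mp (mem_powerset.mp (mem_filter.mp hB).1)
    exact ⟨A, map_mem_sinkOrientations_iff e |>.mp hB, rfl⟩
  · rintro ⟨A, hA, rfl⟩
    exact (map_mem_sinkOrientations_iff e).mpr hA

theorem ne_of_orient {V : Finset α} {E B : Finset (α × α)} {v : α} (hv : v ∉ V)
    (hE : E ⊆ V ×ˢ V) (hB : B ⊆ E) {x y : α} (h : orient E B x y) : x ≠ v ∧ y ≠ v := by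
  have hxy : x ∈ V ∧ y ∈ V := by
    rcases h with h | ⟨h, -⟩
    · exact mem_product.mp (hE (hB h))
    · exact (mem_product.mp (hE h)).symm
  exact ⟨fun h => hv (h ▸ hxy.1), fun h => hv (h ▸ hxy.2)⟩

end Orientations

section Extension

variable [DecidableEq α] {V N T : Finset α} {E A B : Finset (α × α)} {s v : α}

theorem orient_union_iff_of_ne {x y : α} (hx : x ≠ v) (hy : y ≠ v) :
    orient (E ∪ N ×ˢ {v}) (B ∪ T ×ˢ {v}) x y ↔ orient E B x y := by
  simp [orient, hx.symm, hy.symm]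

theorem orient_union_to_iff (hv : v ∉ V) (hE : E ⊆ V ×ˢ V) (hN : N ⊆ V) (hB : B ⊆ E) {x : α} :
    orient (E ∪ N ×ˢ {v}) (B ∪ T ×ˢ {v}) x v ↔ x ∈ T := by
  have hxv : (x, v) ∉ B := fun h => hv (mem_product.mp (hE (hB h))).2
  have hvx : (v, x) ∉ E := fun h => hv (mem_product.mp (hE h)).1
  have hvN : v ∉ N := fun h => hv (hN h)
  simp [orient, hxv, hvx, hvN]

theorem orient_union_from_iff (hv : v ∉ V) (hE : E ⊆ V ×ˢ V) (hN : N ⊆ V) (hB : B ⊆ E)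
    (hT : T ⊆ N) {y : α} : orient (E ∪ N ×ˢ {v}) (B ∪ T ×ˢ {v}) v y ↔ y ∈ N \ T := by
  have hvy : (v, y) ∉ B := fun h => hv (mem_product.mp (hE (hB h))).1
  have hyv : (y, v) ∉ E := fun h => hv (mem_product.mp (hE h)).2
  have hyvB : (y, v) ∉ B := fun h => hyv (hB h)
  have hvT : v ∉ T := fun h => hv (hN (hT h))
  simp [orient, hvy, hyv, hyvB, hvT]

theorem acyclic_union_iff (hv : v ∉ V) (hE : E ⊆ V ×ˢ V) (hN : N ⊆ V) (hB : B ⊆ E)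
    (hT : T ⊆ N) (hclique : ∀ u ∈ N, ∀ w ∈ N, u ≠ w → (u, w) ∈ E ∨ (w, u) ∈ E) :
    (∀ x, ¬ TransGen (orient (E ∪ N ×ˢ {v}) (B ∪ T ×ˢ {v})) x x) ↔
      (∀ x, ¬ TransGen (orient E B) x x) ∧ ∀ u ∈ T, ∀ w ∈ N \ T, orient E B u w := by
  have hle : ∀ x y, orient E B x y → orient (E ∪ N ×ˢ {v}) (B ∪ T ×ˢ {v}) x y := fun x y h =>
    (orient_union_iff_of_ne (ne_of_orient hv hE hB h).1 (ne_of_orient hv hE hB h).2).mpr h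
  constructor
  · refine fun h => ⟨fun x hx => h x (TransGen.mono hle x x hx), fun u hu w hw => ?_⟩
    obtain ⟨hwN, hwT⟩ := mem_sdiff.mp hw
    have hun : orient (E ∪ N ×ˢ {v}) (B ∪ T ×ˢ {v}) u v := (orient_union_to_iff hv hE hN hB).mpr hu
    have hnw : orient (E ∪ N ×ˢ {v}) (B ∪ T ×ˢ {v}) v w :=
      (orient_union_from_iff hv hE hN hB hT).mpr hw
    exact (orient_or_orient (hclique u (hT hu) w hwN fun h => hwT (h ▸ hu))).resolve_right
      fun hwu => h u (.head hun (.head hnw (.single (hle _ _ hwu))))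
  · rintro ⟨hr, hsep⟩
    refine acyclic_of_bypass v hr (fun x y hx hy h => (orient_union_iff_of_ne hx hy).mp h)
      (fun h => hv (hN (mem_sdiff.mp ((orient_union_from_iff hv hE hN hB hT).mp h)).1))
      fun x y hx hy => hsep x ((orient_union_to_iff hv hE hN hB).mp hx) y
        ((orient_union_from_iff hv hE hN hB hT).mp hy)

theorem forall_not_orient_union_iff (hv : v ∉ V) (hE : E ⊆ V ×ˢ V) (hN : N ⊆ V) (hB : B ⊆ E)
    (hTN : T ⊂ N) (hsep : ∀ u ∈ T, ∀ w ∈ N \ T, orient E B u w) {x : α} (hx : x ≠ v) :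
    (∀ y, ¬ orient (E ∪ N ×ˢ {v}) (B ∪ T ×ˢ {v}) x y) ↔ ∀ y, ¬ orient E B x y := by
  refine ⟨fun h y hxy => h y ((orient_union_iff_of_ne hx (ne_of_orient hv hE hB hxy).2).mpr hxy),
    fun h y hxy => ?_⟩
  rcases eq_or_ne y v with rfl | hy
  · obtain ⟨w, hwN, hwT⟩ := exists_of_ssubset hTN
    exact h w (hsep x ((orient_union_to_iff hv hE hN hB).mp hxy) w (mem_sdiff.mpr ⟨hwN, hwT⟩))
  · exact h y ((orient_union_iff_of_ne hx hy).mp hxy)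

theorem union_mem_sinkOrientations_iff (hv : v ∉ V) (hE : E ⊆ V ×ˢ V) (hN : N ⊆ V) (hs : s ∈ V)
    (hclique : ∀ u ∈ N, ∀ w ∈ N, u ≠ w → (u, w) ∈ E ∨ (w, u) ∈ E) (hB : B ⊆ E) (hT : T ⊆ N) :
    B ∪ T ×ˢ {v} ∈ sinkOrientations (insert v V) (E ∪ N ×ˢ {v}) s ↔
      B ∈ sinkOrientations V E s ∧ T ∈ properUpperSets (orient E B) N := by
  have hvs : v ≠ s := fun h => hv (h ▸ hs)
  have hsink_v : (∀ y, ¬ orient (E ∪ N ×ˢ {v}) (B ∪ T ×ˢ {v}) v y) ↔ ¬ T ⊂ N := by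
    simp only [orient_union_from_iff hv hE hN hB hT, mem_sdiff, ssubset_iff_of_subset hT,
      not_exists, not_and]
  have hne : ∀ x ∈ V, x ≠ v := fun x hx h => hv (h ▸ hx)
  simp only [mem_sinkOrientations, properUpperSets, mem_filter, mem_ssubsets, forall_mem_insert,
    acyclic_union_iff hv hE hN hB hT hclique, hsink_v, union_subset_union hB
      (product_subset_product_left hT), hB, true_and, hvs, iff_false, not_not]
  constructor
  · rintro ⟨⟨hr, hsep⟩, hTN, hsink⟩
    exact ⟨⟨hr, fun x hx => (forall_not_orient_union_iff hv hE hN hB hTN hsep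
      (hne x hx)).symm.trans (hsink x hx)⟩, hTN, hsep⟩
  · rintro ⟨⟨hr, hsink⟩, hTN, hsep⟩
    exact ⟨⟨hr, hsep⟩, hTN, fun x hx => (forall_not_orient_union_iff hv hE hN hB hTN hsep
      (hne x hx)).trans (hsink x hx)⟩

theorem union_product_inter_eq (hv : v ∉ V) (hE : E ⊆ V ×ˢ V) (hB : B ⊆ E) :
    (B ∪ T ×ˢ {v}) ∩ E = B := by
  ext ⟨x, y⟩
  have : (x, v) ∉ E := fun h => hv (mem_product.mp (hE h)).2
  constructor
  · simp only [mem_inter, mem_union, mem_product, mem_singleton]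
    rintro ⟨h | ⟨-, rfl⟩, hxy⟩
    · exact h
    · exact absurd hxy this
  · exact fun h => mem_inter.mpr ⟨mem_union_left _ h, hB h⟩

theorem filter_mem_union_product_eq (hv : v ∉ V) (hE : E ⊆ V ×ˢ V) (hB : B ⊆ E) (hT : T ⊆ N) :
    N.filter (fun u => (u, v) ∈ B ∪ T ×ˢ {v}) = T := by
  ext u
  have : (u, v) ∉ B := fun h => hv (mem_product.mp (hE (hB h))).2
  simp only [mem_filter, mem_union, this, mem_product, mem_singleton, and_true, false_or]
  exact ⟨And.right, fun h => ⟨hT h, h⟩⟩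

theorem inter_union_filter_product_eq (hA : A ⊆ E ∪ N ×ˢ {v}) :
    A ∩ E ∪ (N.filter fun u => (u, v) ∈ A) ×ˢ {v} = A := by
  ext ⟨x, y⟩
  have := @hA (x, y)
  simp only [mem_union, mem_inter, mem_product, mem_filter, mem_singleton] at this ⊢
  constructor
  · rintro (⟨h, -⟩ | ⟨⟨-, h⟩, rfl⟩) <;> assumption
  · intro h
    rcases this h with h' | ⟨h', rfl⟩
    · exact .inl ⟨h, h'⟩
    · exact .inr ⟨⟨h', h⟩, rfl⟩

theorem card_union_product (hv : v ∉ V) (hE : E ⊆ V ×ˢ V) (hB : B ⊆ E) :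
    #(B ∪ T ×ˢ {v}) = #B + #T := by
  rw [card_union_of_disjoint, card_product, card_singleton, mul_one]
  refine disjoint_left.mpr fun p hpB hpT => hv ?_
  have := (mem_product.mp (hE (hB hpB))).2
  rwa [mem_singleton.mp (mem_product.mp hpT).2] at this

theorem sum_sinkOrientations_insert {R : Type*} [CommSemiring R] (hv : v ∉ V)
    (hE : E ⊆ V ×ˢ V) (hN : N ⊆ V) (hs : s ∈ V)
    (hclique : ∀ u ∈ N, ∀ w ∈ N, u ≠ w → (u, w) ∈ E ∨ (w, u) ∈ E) (q : R) :
    ∑ A ∈ sinkOrientations (insert v V) (E ∪ N ×ˢ {v}) s, q ^ #A =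
      (∑ k ∈ range #N, q ^ k) * ∑ B ∈ sinkOrientations V E s, q ^ #B := by
  have hsub : ∀ A ∈ sinkOrientations (insert v V) (E ∪ N ×ˢ {v}) s, A ⊆ E ∪ N ×ˢ {v} :=
    fun A hA => (mem_sinkOrientations.mp hA).1
  calc ∑ A ∈ sinkOrientations (insert v V) (E ∪ N ×ˢ {v}) s, q ^ #A
      = ∑ p ∈ (sinkOrientations V E s).sigma (fun B => properUpperSets (orient E B) N),
          q ^ (#p.1 + #p.2) := by
        refine sum_nbij' (fun A => ⟨A ∩ E, N.filter fun u => (u, v) ∈ A⟩)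
          (fun p => p.1 ∪ p.2 ×ˢ {v}) (fun A hA => ?_) (fun p hp => ?_) (fun A hA => ?_)
          (fun p hp => ?_) (fun A hA => ?_)
        · rw [mem_sigma, ← union_mem_sinkOrientations_iff hv hE hN hs hclique inter_subset_right
            (filter_subset _ _), inter_union_filter_product_eq (hsub A hA)]
          exact hA
        · obtain ⟨hB, hT⟩ := mem_sigma.mp hp
          exact (union_mem_sinkOrientations_iff hv hE hN hs hclique (mem_sinkOrientations.mp hB).1
            (mem_ssubsets.mp (mem_filter.mp hT).1).subset).mpr ⟨hB, hT⟩
        · exact inter_union_filter_product_eq (hsub A hA)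
        · obtain ⟨B, T⟩ := p
          obtain ⟨hB, hT⟩ := mem_sigma.mp hp
          have hBE := (mem_sinkOrientations.mp hB).1
          dsimp only
          rw [union_product_inter_eq hv hE hBE,
            filter_mem_union_product_eq hv hE hBE (mem_ssubsets.mp (mem_filter.mp hT).1).subset]
        · dsimp only
          rw [← card_union_product hv hE inter_subset_right,
            inter_union_filter_product_eq (hsub A hA)]
    _ = ∑ B ∈ sinkOrientations V E s, q ^ #B * ∑ T ∈ properUpperSets (orient E B) N, q ^ #T := by
        rw [sum_sigma]
        simp only [pow_add, mul_sum]
    _ = _ := by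
        rw [mul_comm, sum_mul]
        refine sum_congr rfl fun B hB => ?_
        obtain ⟨hBE, hr, -⟩ := mem_sinkOrientations.mp hB
        rw [sum_properUpperSets hr fun u hu w hw huw => orient_or_orient (hclique u hu w hw huw)]

end Extension

section UnitInterval

variable {n : ℕ} {a : ℕ → ℕ}

def edges (n : ℕ) (a : ℕ → ℕ) : Finset (ℕ × ℕ) :=
  (range n ×ˢ range n).filter fun p => p.1 < p.2 ∧ p.2 ≤ p.1 + a p.1

def lowerNbrs (j : ℕ) (a : ℕ → ℕ) : Finset ℕ := (range j).filter fun i => j ≤ i + a i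

theorem edges_subset : edges n a ⊆ range n ×ˢ range n := filter_subset _ _

theorem lowerNbrs_subset : lowerNbrs n a ⊆ range n := filter_subset _ _

theorem edges_succ : edges (n + 1) a = edges n a ∪ lowerNbrs n a ×ˢ {n} := by
  ext ⟨i, j⟩
  simp only [edges, lowerNbrs, mem_union, mem_filter, mem_product, mem_range, mem_singleton]
  omega

theorem lowerNbrs_clique {u w : ℕ} (hu : u ∈ lowerNbrs n a) (hw : w ∈ lowerNbrs n a) (huw : u ≠ w) :
    (u, w) ∈ edges n a ∨ (w, u) ∈ edges n a := by
  simp only [lowerNbrs, edges, mem_filter, mem_product, mem_range] at hu hw ⊢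
  omega

theorem sum_sinkOrientations_edges {R : Type*} [CommSemiring R] (hn : 0 < n) (q : R) :
    ∑ A ∈ sinkOrientations (range n) (edges n a) 0, q ^ #A =
      ∏ j ∈ Ico 1 n, ∑ k ∈ range #(lowerNbrs j a), q ^ k := by
  induction n, hn using Nat.le_induction with
  | base =>
    have hedges : edges 1 a = ∅ := by
      ext ⟨i, j⟩
      simp only [edges, mem_filter, mem_product, mem_range, notMem_empty, iff_false]
      omega
    have hempty : ∀ x y, ¬ orient (∅ : Finset (ℕ × ℕ)) ∅ x y := by simp [orient]
    have : sinkOrientations (range 1) (edges 1 a) 0 = {∅} := by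
      rw [hedges, sinkOrientations, powerset_empty, filter_singleton, if_pos]
      exact ⟨fun x h => hempty _ _ (TransGen.head'_iff.mp h).choose_spec.1, by simp [hempty]⟩
    rw [this]
    simp
  | succ n hn ih =>
    rw [edges_succ, range_add_one, sum_sinkOrientations_insert notMem_range_self edges_subset
      lowerNbrs_subset (mem_range.mpr hn) (fun u hu w hw => lowerNbrs_clique hu hw), ih,
      prod_Ico_succ_top hn, mul_comm]

end UnitInterval

section RowsColumns

theorem count_map_eq_card_filter_le_sub {ι : Type*} (s : Finset ι) (f : ι → ℕ) (k : ℕ) :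
    Multiset.count k (s.val.map f) = #{i ∈ s | k ≤ f i} - #{i ∈ s | k + 1 ≤ f i} := by
  rw [Multiset.count_map]
  change #{i ∈ s | k = f i} = _
  rw [← card_sdiff_of_subset (monotone_filter_right _ fun i _ h => by omega)]
  congr 1
  ext i
  by_cases hi : i ∈ s <;> simp only [mem_filter, mem_sdiff, hi, true_and, false_and]
  omega

theorem prod_comp_eq_of_card_filter_le {ι κ M : Type*} [CommMonoid M] {s : Finset ι}
    {t : Finset κ} {f : ι → ℕ} {g : κ → ℕ}
    (h : ∀ k, #{i ∈ s | k ≤ f i} = #{j ∈ t | k ≤ g j}) (F : ℕ → M) :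
    ∏ i ∈ s, F (f i) = ∏ j ∈ t, F (g j) := by
  have hmap : s.val.map f = t.val.map g := Multiset.ext.mpr fun k => by
    rw [count_map_eq_card_filter_le_sub, count_map_eq_card_filter_le_sub, h, h]
  calc ∏ i ∈ s, F (f i) = ((s.val.map f).map F).prod := by rw [Multiset.map_map]; rfl
    _ = ((t.val.map g).map F).prod := by rw [hmap]
    _ = ∏ j ∈ t, F (g j) := by rw [Multiset.map_map]; rfl

theorem le_card_filter_range_iff {p : ℕ → Prop} [DecidablePred p] (hp : Monotone p) {j k : ℕ}
    (hk : 0 < k) :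
    k ≤ #{i ∈ range j | p i} ↔ k ≤ j ∧ p (j - k) := by
  constructor
  · intro h
    have hkj : k ≤ j := h.trans ((card_filter_le _ _).trans (card_range j).le)
    refine ⟨hkj, by_contra fun hpk => ?_⟩
    have hsub : {i ∈ range j | p i} ⊆ Ioo (j - k) j := fun i hi => by
      obtain ⟨hij, hpi⟩ := mem_filter.mp hi
      exact mem_Ioo.mpr ⟨lt_of_not_ge fun hle => hpk (hp hle hpi), mem_range.mp hij⟩
    have := h.trans (card_le_card hsub)
    rw [Nat.card_Ioo] at this
    omega
  · rintro ⟨hkj, hpk⟩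
    have hsub : Ico (j - k) j ⊆ {i ∈ range j | p i} := fun i hi => by
      obtain ⟨hki, hij⟩ := mem_Ico.mp hi
      exact mem_filter.mpr ⟨mem_range.mpr hij, hp hki hpk⟩
    have := card_le_card hsub
    rw [Nat.card_Ico] at this
    omega

variable {n : ℕ} {a : ℕ → ℕ}

theorem prod_lowerNbrs_eq_prod {M : Type*} [CommMonoid M] (hmono : Monotone fun i => i + a i)
    (hbound : ∀ i < n, i + a i < n) (F : ℕ → M) :
    ∏ j ∈ Ico 1 n, F #(lowerNbrs j a) = ∏ i ∈ range (n - 1), F (a i) := by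
  refine (prod_comp_eq_of_card_filter_le (fun k => ?_) F).symm
  rcases Nat.eq_zero_or_pos k with rfl | hk
  · simp
  have hcol : ∀ j, k ≤ #(lowerNbrs j a) ↔ k ≤ j ∧ k ≤ a (j - k) := fun j => by
    rw [lowerNbrs, le_card_filter_range_iff (fun i i' h hi => hi.trans (hmono h)) hk]
    omega
  calc #{i ∈ range (n - 1) | k ≤ a i} = #{i ∈ range (n - k) | k ≤ a i} := by
        congr 1
        ext i
        have := hbound i
        simp only [mem_filter, mem_range]
        omega
    _ = #{j ∈ Ico 1 n | k ≤ #(lowerNbrs j a)} := by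
        refine card_nbij' (· + k) (· - k) (fun i hi => ?_) (fun j hj => ?_) (fun i _ => ?_)
          (fun j hj => ?_)
        · simp only [mem_coe, mem_filter, mem_range, mem_Ico, hcol, Nat.add_sub_cancel] at hi ⊢
          omega
        · simp only [mem_coe, mem_filter, mem_range, mem_Ico, hcol] at hj ⊢
          omega
        · simp
        · simp only [mem_coe, mem_filter, mem_Ico, hcol] at hj
          dsimp only
          omega

end RowsColumns

section Fin

variable {n : ℕ} {a : Fin n → ℕ}

def extendByZero (a : Fin n → ℕ) (i : ℕ) : ℕ := if h : i < n then a ⟨i, h⟩ else 0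

theorem extendByZero_val (i : Fin n) : extendByZero a i = a i := dif_pos i.isLt

theorem map_uigEdges :
    (uigEdges n a).map (Fin.valEmbedding.prodMap Fin.valEmbedding) = edges n (extendByZero a) := by
  ext ⟨i, j⟩
  simp only [uigEdges, edges, mem_map, mem_filter, mem_univ, true_and, mem_product, mem_range,
    Function.Embedding.coe_prodMap, Fin.valEmbedding_apply, Prod.exists, Prod.map_apply,
    Prod.mk.injEq]
  constructor
  · rintro ⟨i, j, ⟨hij, hj⟩, rfl, rfl⟩
    exact ⟨⟨i.isLt, j.isLt⟩, hij, extendByZero_val i ▸ hj⟩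
  · rintro ⟨⟨hi, hj⟩, hij, hji⟩
    exact ⟨⟨i, hi⟩, ⟨j, hj⟩, ⟨hij, extendByZero_val (a := a) ⟨i, hi⟩ ▸ hji⟩, rfl, rfl⟩

theorem monotone_add_extendByZero (harea₁ : ∀ i : Fin n, (i : ℕ) + a i < n)
    (harea₂ : ∀ i j : Fin n, (i : ℕ) + 1 = (j : ℕ) → a i ≤ a j + 1) :
    Monotone fun i => i + extendByZero a i := by
  refine monotone_nat_of_le_succ fun i => ?_
  by_cases h : i + 1 < n
  · have := harea₂ ⟨i, by omega⟩ ⟨i + 1, h⟩ rfl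
    simp only [extendByZero, dif_pos h, dif_pos (by omega : i < n)]
    omega
  · by_cases h' : i < n
    · have : i + a ⟨i, h'⟩ < n := harea₁ ⟨i, h'⟩
      simp only [extendByZero, dif_pos h', dif_neg h]
      omega
    · simp only [extendByZero, dif_neg h']
      omega

end Fin

end SinkOrientation

open SinkOrientation

theorem acyclic_orientation_unique_sink_generating_function_general (n : ℕ) (hn : 0 < n)
    (a : Fin n → ℕ)
    (harea₁ : ∀ i : Fin n, (i : ℕ) + a i < n)
    (harea₂ : ∀ i j : Fin n, (i : ℕ) + 1 = (j : ℕ) → a i ≤ a j + 1) :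
    ∑ A ∈ (uigEdges n a).powerset.filter
        (fun A => (∀ x : Fin n, ¬ Relation.TransGen (orientRel n a A) x x) ∧
          (∀ v : Fin n, (∀ u : Fin n, ¬ orientRel n a A v u) ↔ v = ⟨0, hn⟩)),
        (Polynomial.X : Polynomial ℚ) ^ A.card
      = ∏ i ∈ Finset.univ.filter (fun i : Fin n => (i : ℕ) + 1 < n),
          ∑ k ∈ Finset.range (a i), (Polynomial.X : Polynomial ℚ) ^ k := by
  have hmap : sinkOrientations (range n) (edges n (extendByZero a)) 0 =
      (sinkOrientations univ (uigEdges n a) ⟨0, hn⟩).map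
        (mapEmbedding (Fin.valEmbedding.prodMap Fin.valEmbedding)).toEmbedding := by
    rw [← Nat.Iio_eq_range, ← Fin.map_valEmbedding_univ, ← map_uigEdges]
    exact sinkOrientations_map Fin.valEmbedding univ (uigEdges n a) ⟨0, hn⟩
  have hrows : (univ.filter fun i : Fin n => (i : ℕ) + 1 < n).map Fin.valEmbedding =
      range (n - 1) := by
    ext i
    simp only [mem_map, mem_filter, mem_univ, true_and, Fin.valEmbedding_apply, mem_range]
    exact ⟨fun ⟨j, hj, hji⟩ => by omega, fun hi => ⟨⟨i, by omega⟩, show i + 1 < n by omega, rfl⟩⟩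
  calc _ = ∑ A ∈ sinkOrientations univ (uigEdges n a) ⟨0, hn⟩, X ^ #A := by
        simp only [sinkOrientations, mem_univ, true_implies]
        rfl
    _ = ∑ A ∈ sinkOrientations (range n) (edges n (extendByZero a)) 0, X ^ #A := by
        rw [hmap, sum_map]
        simp
    _ = ∏ j ∈ Ico 1 n, ∑ k ∈ range #(lowerNbrs j (extendByZero a)), X ^ k :=
        sum_sinkOrientations_edges hn (X : ℚ[X])
    _ = ∏ i ∈ range (n - 1), ∑ k ∈ range (extendByZero a i), X ^ k :=
        prod_lowerNbrs_eq_prod (monotone_add_extendByZero harea₁ harea₂)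
          (fun i hi => extendByZero_val (a := a) ⟨i, hi⟩ ▸ harea₁ ⟨i, hi⟩)
          fun m => ∑ k ∈ range m, X ^ k
    _ = _ := by
        rw [← hrows, prod_map]
        simp only [Fin.valEmbedding_apply, extendByZero_val]

/-- for a connected unit interval graph `Γ_a`, the sum of `q^{asc θ}` over
acyclic orientations `θ` whose unique sink is the first vertex equals
`Π_{i=1}^{n-1} [a_i]_q` (0-indexed: the product over the first `n-1` rows). -/
theorem acyclic_orientation_unique_sink_generating_function (n : ℕ) (hn : 0 < n)
    (a : Fin n → ℕ)
    (harea₁ : ∀ i : Fin n, (i : ℕ) + a i < n)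
    (harea₂ : ∀ i j : Fin n, (i : ℕ) + 1 = (j : ℕ) → a i ≤ a j + 1)
    (hconn : ∀ i : Fin n, (i : ℕ) + 1 < n → 1 ≤ a i) :
    ∑ A ∈ (uigEdges n a).powerset.filter
        (fun A => (∀ x : Fin n, ¬ Relation.TransGen (orientRel n a A) x x) ∧
          (∀ v : Fin n, (∀ u : Fin n, ¬ orientRel n a A v u) ↔ v = ⟨0, hn⟩)),
        (Polynomial.X : Polynomial ℚ) ^ A.card
      = ∏ i ∈ Finset.univ.filter (fun i : Fin n => (i : ℕ) + 1 < n),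
          ∑ k ∈ Finset.range (a i), (Polynomial.X : Polynomial ℚ) ^ k :=
  acyclic_orientation_unique_sink_generating_function_general n hn a harea₁ harea₂
end

section
/- For a unit interval graph Γ_a on n vertices with area sequence a and a_n = 0, the shifted unicellular LLT polynomial satisfies the identity G_a(x; q+1) = Σ_θ q^{asc(θ)} X_θ(x), where the sum is over all orientations θ of Γ_a, and X_θ is the generating function of colorings F with F(i) < F(j) for every ascending edge i → j of θ. -/
open Finset Polynomial

lemma binom_powerset {α : Type*} [DecidableEq α] (s : Finset α) :
    (Polynomial.X + 1 : Polynomial ℚ) ^ s.card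
      = ∑ A ∈ s.powerset, (Polynomial.X : Polynomial ℚ) ^ A.card := by
  have h := Finset.prod_add (fun _ : α => (Polynomial.X : Polynomial ℚ))
      (fun _ : α => (1 : Polynomial ℚ)) s
  simpa using h

lemma powerset_filter_eq {α : Type*} [DecidableEq α] (s : Finset α) (p : α → Prop)
    [DecidablePred p] :
    (s.filter p).powerset = s.powerset.filter (fun A => ∀ x ∈ A, p x) := by
  ext A
  simp only [Finset.mem_powerset, Finset.subset_iff, Finset.mem_filter]
  exact ⟨fun h => ⟨fun x hx => (h hx).1, fun x hx => (h hx).2⟩,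
    fun h x hx => ⟨h.1 hx, h.2 _ hx⟩⟩

/-- `G_a(x; q+1) = Σ_θ q^{asc θ} X_θ(x)` for a unit interval graph `Γ_a`,
where the sum is over all orientations `θ` of `Γ_a` (encoded by their sets `A` of
ascending edges, so `asc θ = |A|`), and `X_θ` is the generating function of colorings
`F` satisfying `F i < F j` for every ascending edge `i → j` of `θ`.  Both sides are
truncated to the variables `x_1, ..., x_m`. -/
theorem llt_orientation_expansion (n : ℕ) (a : Fin n → ℕ)
    (harea₁ : ∀ i : Fin n, (i : ℕ) + a i < n)
    (harea₂ : ∀ i j : Fin n, (i : ℕ) + 1 = (j : ℕ) → a i ≤ a j + 1)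
    (m : ℕ) :
    (∑ F : Fin n → Fin m,
        MvPolynomial.C ((Polynomial.X + 1 : Polynomial ℚ) ^
          (((uigEdges n a).filter (fun p => F p.1 < F p.2)).card)) *
          ∏ v : Fin n, MvPolynomial.X (F v))
      = ∑ A ∈ (uigEdges n a).powerset,
          MvPolynomial.C ((Polynomial.X : Polynomial ℚ) ^ A.card) *
            ∑ F ∈ Finset.univ.filter
                (fun F : Fin n → Fin m => ∀ p ∈ A, F p.1 < F p.2),
              ∏ v : Fin n, MvPolynomial.X (F v) := by
  have lhs_eq : ∀ F : Fin n → Fin m,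
      MvPolynomial.C ((Polynomial.X + 1 : Polynomial ℚ) ^
          (((uigEdges n a).filter (fun p => F p.1 < F p.2)).card)) *
          ∏ v : Fin n, MvPolynomial.X (F v)
        = ∑ A ∈ (uigEdges n a).powerset,
            (if ∀ p ∈ A, F p.1 < F p.2 then
              MvPolynomial.C ((Polynomial.X : Polynomial ℚ) ^ A.card) *
                ∏ v : Fin n, MvPolynomial.X (F v) else 0) := by
    intro F
    rw [binom_powerset, powerset_filter_eq, Finset.sum_filter, map_sum, Finset.sum_mul]
    refine Finset.sum_congr rfl fun A _ => ?_
    split_ifs <;> simp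
  calc (∑ F : Fin n → Fin m,
        MvPolynomial.C ((Polynomial.X + 1 : Polynomial ℚ) ^
          (((uigEdges n a).filter (fun p => F p.1 < F p.2)).card)) *
          ∏ v : Fin n, MvPolynomial.X (F v))
      = ∑ F : Fin n → Fin m, ∑ A ∈ (uigEdges n a).powerset,
          (if ∀ p ∈ A, F p.1 < F p.2 then
            MvPolynomial.C ((Polynomial.X : Polynomial ℚ) ^ A.card) *
              ∏ v : Fin n, MvPolynomial.X (F v) else 0) :=
        Finset.sum_congr rfl fun F _ => lhs_eq F
    _ = ∑ A ∈ (uigEdges n a).powerset, ∑ F : Fin n → Fin m,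
          (if ∀ p ∈ A, F p.1 < F p.2 then
            MvPolynomial.C ((Polynomial.X : Polynomial ℚ) ^ A.card) *
              ∏ v : Fin n, MvPolynomial.X (F v) else 0) := Finset.sum_comm
    _ = _ := by
        refine Finset.sum_congr rfl fun A _ => ?_
        rw [Finset.mul_sum, Finset.sum_filter]
end

section
/- The generating function of the shifted unicellular LLT polynomials of path graphs satisfies Σ_{n ≥ 0} G_{P_n}(x; q+1) z^n = 1 / (1 - Σ_{i ≥ 1} q^{i-1} e_i(x) z^i). -/
open Finset Polynomial

/-- The shifted unicellular LLT polynomial `G_{P_n}(x; q+1)` of the path `P_n`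
(edges `i → i+1`), truncated to `m` variables: the sum over all colorings `F` of
`(q+1)^{asc F} x^F`, with coefficients in `ℚ[q]`. -/
noncomputable def pathLLTShifted (m n : ℕ) : MvPolynomial (Fin m) (Polynomial ℚ) :=
  ∑ F : Fin n → Fin m,
    MvPolynomial.C ((Polynomial.X + 1 : Polynomial ℚ) ^
      ((Finset.univ.filter (fun p : Fin n × Fin n =>
          (p.1 : ℕ) + 1 = (p.2 : ℕ) ∧ F p.1 < F p.2)).card)) *
      ∏ v : Fin n, MvPolynomial.X (F v)

/-!
Let `L_n(c)` be the part of `G_{P_{n+1}}(x; q+1)` coming from colorings whose first vertex has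
color `c`. Removing the first vertex, whose edge to the next one contributes `q + 1` if it is an
ascent and `1` otherwise, gives `L_{n+1}(c) = x_c (G_{P_{n+1}} + q ∑_{d > c} L_n(d))`. Unfolding
this, `L_n(c) = ∑_{i+j=n} q^i R_i(c) G_{P_j}`, where `R_i(c)` is the sum of `x^T` over the
`(i+1)`-sets `T` with minimum `c`. Summing over `c` turns `R_i` into `e_{i+1}`, so
`G_{P_{n+1}} = ∑_{i+j=n} q^i e_{i+1} G_{P_j}`, which is the identity read coefficientwise in `z`.
-/

theorem Finset.sum_powersetCard_succ_prod_eq_sum_min {ι R : Type*} [LinearOrder ι]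
    [CommSemiring R] (s : Finset ι) (k : ℕ) (f : ι → R) :
    ∑ T ∈ s.powersetCard (k + 1), ∏ d ∈ T, f d =
      ∑ c ∈ s, f c * ∑ T ∈ (s.filter (c < ·)).powersetCard k, ∏ d ∈ T, f d := by
  induction s using Finset.induction_on_min with
  | empty => rw [powersetCard_eq_empty.2 (by simp), sum_empty, sum_empty]
  | insert a s has ih =>
    have ha : a ∉ s := fun h => lt_irrefl a (has a h)
    have hdisj : Disjoint (s.powersetCard (k + 1)) ((s.powersetCard k).image (insert a)) := by
      simp only [disjoint_left, mem_image, mem_powersetCard]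
      rintro T ⟨hTs, -⟩ ⟨U, -, rfl⟩
      exact ha (hTs (mem_insert_self a U))
    have hnot : ∀ T ∈ s.powersetCard k, a ∉ T := fun T hT h => ha ((mem_powersetCard.1 hT).1 h)
    have hinj : Set.InjOn (insert a) (s.powersetCard k : Set (Finset ι)) := fun T hT U hU h => by
      rw [← erase_insert (hnot T hT), ← erase_insert (hnot U hU)]
      exact congrArg (·.erase a) h
    have hfilter : ∀ c ∈ s, (insert a s).filter (c < ·) = s.filter (c < ·) := fun c hc => by
      rw [filter_insert, if_neg (has c hc).not_gt]
    rw [powersetCard_succ_insert ha, sum_union hdisj, sum_image hinj, ih, sum_insert ha,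
      filter_insert, if_neg (lt_irrefl a), filter_true_of_mem has, add_comm, mul_sum,
      sum_congr rfl fun T hT => prod_insert (hnot T hT)]
    exact congrArg _ (sum_congr rfl fun c hc => by rw [hfilter c hc])

theorem Fin.sum_univ_fun_succ {α M : Type*} [Fintype α] [AddCommMonoid M] {n : ℕ}
    (f : (Fin (n + 1) → α) → M) : ∑ F, f F = ∑ a, ∑ F : Fin n → α, f (Fin.cons a F) := by
  rw [← Fintype.sum_prod_type']
  exact (Fintype.sum_equiv (Fin.consEquiv fun _ => α) _ _ fun _ => rfl).symm

theorem PowerSeries.one_sub_mk_mul_mk_eq_one {R : Type*} [CommRing R] {a p : ℕ → R}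
    (ha : a 0 = 0) (hp : p 0 = 1)
    (hrec : ∀ n, p (n + 1) = ∑ x ∈ antidiagonal n, a (x.1 + 1) * p x.2) :
    (1 - PowerSeries.mk a) * PowerSeries.mk p = 1 := by
  ext k
  rw [sub_mul, one_mul, map_sub, PowerSeries.coeff_mul, PowerSeries.coeff_one,
    PowerSeries.coeff_mk]
  simp only [PowerSeries.coeff_mk]
  cases k with
  | zero => simp [ha, hp]
  | succ n => simp [Nat.sum_antidiagonal_succ, ha, hrec]

section IncreasingRuns

variable {σ R : Type*} [LinearOrder σ] [LocallyFiniteOrderTop σ] [CommSemiring R]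

/-- `R_k(c)` of the header; `k` counts the elements of `T` other than `c`. -/
noncomputable def increasingRunsFrom (R : Type*) [CommSemiring R] (k : ℕ) (c : σ) :
    MvPolynomial σ R :=
  MvPolynomial.X c * ∑ T ∈ (Ioi c).powersetCard k, ∏ d ∈ T, MvPolynomial.X d

theorem increasingRunsFrom_zero (c : σ) : increasingRunsFrom R 0 c = MvPolynomial.X c := by
  simp [increasingRunsFrom]

theorem increasingRunsFrom_succ (k : ℕ) (c : σ) :
    increasingRunsFrom R (k + 1) c =
      MvPolynomial.X c * ∑ d ∈ Ioi c, increasingRunsFrom R k d := by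
  rw [increasingRunsFrom, sum_powersetCard_succ_prod_eq_sum_min]
  refine congrArg _ (sum_congr rfl fun d hd => ?_)
  have hIoi : (Ioi c).filter (d < ·) = Ioi d := by
    ext x
    simpa using fun hdx => (mem_Ioi.1 hd).trans hdx
  rw [hIoi, increasingRunsFrom]

theorem esymm_succ_eq_sum_increasingRunsFrom [Fintype σ] (k : ℕ) :
    MvPolynomial.esymm σ R (k + 1) = ∑ c, increasingRunsFrom R k c := by
  rw [MvPolynomial.esymm, sum_powersetCard_succ_prod_eq_sum_min]
  simp only [filter_lt_eq_Ioi, increasingRunsFrom]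

end IncreasingRuns

section Ascents

variable {α : Type*} [LT α] [DecidableLT α]

def ascents {n : ℕ} (F : Fin n → α) : ℕ :=
  (univ.filter fun p : Fin n × Fin n => (p.1 : ℕ) + 1 = p.2 ∧ F p.1 < F p.2).card

theorem ascents_cons {n : ℕ} (a : α) (F : Fin (n + 1) → α) :
    ascents (Fin.cons a F : Fin (n + 2) → α) = ascents F + if a < F 0 then 1 else 0 := by
  have hfirst : ∀ x : Fin (n + 1), 0 = (x : ℕ) ↔ 0 = x := fun x => by
    rw [Fin.ext_iff, Fin.val_zero]
  simp only [ascents, card_filter, Fintype.sum_prod_type, Fin.sum_univ_succ (n := n + 1),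
    Fin.cons_zero, Fin.cons_succ, Fin.val_zero, Fin.val_succ, Nat.add_right_cancel_iff, hfirst,
    Nat.succ_ne_zero, if_false, zero_add, ite_and, sum_ite_eq, mem_univ, if_true]
  exact add_comm _ _

theorem ascents_of_fin_one (F : Fin 1 → α) : ascents F = 0 := by
  simp [ascents]

end Ascents

noncomputable def pathLLTShiftedTerm {m n : ℕ} (F : Fin n → Fin m) : MvPolynomial (Fin m) ℚ[X] :=
  MvPolynomial.C ((X + 1 : ℚ[X]) ^ ascents F) * ∏ v, MvPolynomial.X (F v)

theorem pathLLTShifted_eq_sum (m n : ℕ) :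
    pathLLTShifted m n = ∑ F : Fin n → Fin m, pathLLTShiftedTerm F :=
  rfl

theorem pathLLTShifted_zero (m : ℕ) : pathLLTShifted m 0 = 1 := by
  simp [pathLLTShifted]

theorem pathLLTShiftedTerm_cons {m n : ℕ} (a : Fin m) (F : Fin (n + 1) → Fin m) :
    pathLLTShiftedTerm (Fin.cons a F : Fin (n + 2) → Fin m) =
      MvPolynomial.X a * (1 + if a < F 0 then MvPolynomial.C X else 0) *
        pathLLTShiftedTerm F := by
  rw [pathLLTShiftedTerm, pathLLTShiftedTerm, ascents_cons, Fin.prod_univ_succ, pow_add, map_mul]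
  simp only [Fin.cons_zero, Fin.cons_succ]
  split_ifs <;> simp only [pow_one, pow_zero, map_add, map_one, add_zero] <;> ring

theorem pathLLTShiftedTerm_of_fin_one {m : ℕ} (F : Fin 1 → Fin m) :
    pathLLTShiftedTerm F = MvPolynomial.X (F 0) := by
  simp [pathLLTShiftedTerm, ascents_of_fin_one]

/-- `L_n(c)`: the colorings summed over are those of `P_{n+1}`, not `P_n`. -/
noncomputable def pathLLTShiftedFrom (m n : ℕ) (c : Fin m) : MvPolynomial (Fin m) ℚ[X] :=
  ∑ F : Fin n → Fin m, pathLLTShiftedTerm (Fin.cons c F : Fin (n + 1) → Fin m)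

theorem pathLLTShifted_succ (m n : ℕ) :
    pathLLTShifted m (n + 1) = ∑ c, pathLLTShiftedFrom m n c :=
  Fin.sum_univ_fun_succ _

theorem pathLLTShiftedFrom_zero (m : ℕ) (c : Fin m) :
    pathLLTShiftedFrom m 0 c = MvPolynomial.X c := by
  simp [pathLLTShiftedFrom, pathLLTShiftedTerm_of_fin_one]

theorem pathLLTShiftedFrom_succ (m n : ℕ) (c : Fin m) :
    pathLLTShiftedFrom m (n + 1) c = MvPolynomial.X c *
      (pathLLTShifted m (n + 1) + MvPolynomial.C X * ∑ d ∈ Ioi c, pathLLTShiftedFrom m n d) := by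
  have hstart : ∑ d ∈ Ioi c, pathLLTShiftedFrom m n d =
      ∑ F : Fin (n + 1) → Fin m, if c < F 0 then pathLLTShiftedTerm F else 0 := by
    rw [Fin.sum_univ_fun_succ, ← filter_lt_eq_Ioi, sum_filter]
    simp only [Fin.cons_zero, pathLLTShiftedFrom, sum_ite_irrel, sum_const_zero]
  rw [hstart, pathLLTShifted_eq_sum, pathLLTShiftedFrom, mul_sum, ← sum_add_distrib, mul_sum]
  refine sum_congr rfl fun F _ => ?_
  rw [pathLLTShiftedTerm_cons]
  split_ifs <;> ring

theorem pathLLTShiftedFrom_eq (m n : ℕ) (c : Fin m) :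
    pathLLTShiftedFrom m n c = ∑ p ∈ antidiagonal n,
      MvPolynomial.C (X ^ p.1) * increasingRunsFrom ℚ[X] p.1 c * pathLLTShifted m p.2 := by
  induction n generalizing c with
  | zero => simp [pathLLTShiftedFrom_zero, increasingRunsFrom_zero, pathLLTShifted_zero]
  | succ n ih =>
    rw [pathLLTShiftedFrom_succ, Nat.sum_antidiagonal_succ]
    simp only [ih, increasingRunsFrom_succ, pow_zero, map_one, one_mul, increasingRunsFrom_zero,
      mul_add, mul_sum]
    rw [sum_comm]
    refine congrArg _ (sum_congr rfl fun p _ => ?_)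
    rw [pow_succ, map_mul, sum_mul]
    refine sum_congr rfl fun d _ => ?_
    ring

theorem pathLLTShifted_succ_eq (m n : ℕ) :
    pathLLTShifted m (n + 1) = ∑ p ∈ antidiagonal n,
      MvPolynomial.C (X ^ p.1) * MvPolynomial.esymm (Fin m) ℚ[X] (p.1 + 1) *
        pathLLTShifted m p.2 := by
  simp only [pathLLTShifted_succ, pathLLTShiftedFrom_eq, esymm_succ_eq_sum_increasingRunsFrom,
    mul_sum, sum_mul]
  exact sum_comm

/-- `Σ_n G_{P_n}(x; q+1) z^n = 1 / (1 - Σ_{i≥1} q^{i-1} e_i z^i)`,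
stated denominator-multiplied in the power series ring (in `z`) over symmetric
polynomials in `m` variables, for every number of variables `m`. -/
theorem path_llt_generating_function (m : ℕ) :
    (1 - PowerSeries.mk (fun i =>
        if 1 ≤ i then
          MvPolynomial.C ((Polynomial.X : Polynomial ℚ) ^ (i - 1)) *
            MvPolynomial.esymm (Fin m) (Polynomial ℚ) i
        else 0)) *
      PowerSeries.mk (fun n => pathLLTShifted m n)
    = 1 := by
  refine PowerSeries.one_sub_mk_mul_mk_eq_one (by simp) (pathLLTShifted_zero m) fun n => ?_
  simp only [pathLLTShifted_succ_eq, le_add_iff_nonneg_left, zero_le, if_true, Nat.add_sub_cancel]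
end
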